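/- arXiv:2404.16763 — 6 statements merged into one kernel-verified Lean document; each statement's English description precedes it below -/
import Mathlib

section
/- For all natural numbers p₁, q₁, p₂, q₂ with q₁, q₂ ≥ 1, p₁ ≥ 2q₁ and p₂ ≥ 2q₂, the independence number of the strong product of the two fraction graphs equals α(E_{p₁/q₁} ⊠ E_{p₂/q₂}) = min( ⌊⌊p₁/q₁⌋ · p₂/q₂⌋ , ⌊⌊p₂/q₂⌋ · p₁/q₁⌋ ). -/
open SimpleGraph

/-- The fraction graph `E_{p/q}` on vertex set `ZMod p`: distinct `u, v` are adjacent
iff the representative of `u - v` or of `v - u` in `{0, …, p-1}` is strictly less than `q`. -/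
def fractionGraph (p q : ℕ) : SimpleGraph (ZMod p) where
  Adj u v := u ≠ v ∧ ((u - v).val < q ∨ (v - u).val < q)
  symm := ⟨fun _ _ h => ⟨h.1.symm, h.2.symm⟩⟩
  loopless := ⟨fun _ h => h.1 rfl⟩

/-- The cycle graph `C_n` on vertex set `ZMod n`: `i` is adjacent to `i ± 1`. -/
def cycleGraphZMod (n : ℕ) : SimpleGraph (ZMod n) where
  Adj u v := u ≠ v ∧ (u - v = 1 ∨ v - u = 1)
  symm := ⟨fun _ _ h => ⟨h.1.symm, h.2.symm⟩⟩
  loopless := ⟨fun _ h => h.1 rfl⟩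

/-- The strong product of two simple graphs. -/
def strongProd {α β : Type*} (G : SimpleGraph α) (H : SimpleGraph β) :
    SimpleGraph (α × β) where
  Adj x y := x ≠ y ∧ (x.1 = y.1 ∨ G.Adj x.1 y.1) ∧ (x.2 = y.2 ∨ H.Adj x.2 y.2)
  symm := ⟨fun _ _ h => ⟨h.1.symm, h.2.1.imp Eq.symm (fun h' => h'.symm), h.2.2.imp Eq.symm (fun h' => h'.symm)⟩⟩
  loopless := ⟨fun _ h => h.1 rfl⟩

/-- The `n`-fold strong power of a simple graph. -/
def strongPow {α : Type*} (G : SimpleGraph α) (n : ℕ) : SimpleGraph (Fin n → α) where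
  Adj u v := u ≠ v ∧ ∀ i, u i = v i ∨ G.Adj (u i) (v i)
  symm := ⟨fun _ _ h => ⟨h.1.symm, fun i => (h.2 i).imp Eq.symm (fun h' => h'.symm)⟩⟩
  loopless := ⟨fun _ h => h.1 rfl⟩

/-- The strong product of a family of simple graphs. -/
def strongProdFamily {ι : Type*} {α : ι → Type*} (G : ∀ i, SimpleGraph (α i)) :
    SimpleGraph (∀ i, α i) where
  Adj u v := u ≠ v ∧ ∀ i, u i = v i ∨ (G i).Adj (u i) (v i)
  symm := ⟨fun _ _ h => ⟨h.1.symm, fun i => (h.2 i).imp Eq.symm (fun h' => h'.symm)⟩⟩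
  loopless := ⟨fun _ h => h.1 rfl⟩

/-- A finset of vertices is independent if its elements are pairwise non-adjacent. -/
def IsIndepFinset {α : Type*} (G : SimpleGraph α) (s : Finset α) : Prop :=
  ∀ u ∈ s, ∀ v ∈ s, u ≠ v → ¬ G.Adj u v

/-- The independence number of a graph: the greatest cardinality of an independent set. -/
noncomputable def indepNum {α : Type*} (G : SimpleGraph α) : ℕ :=
  sSup {n : ℕ | ∃ s : Finset α, IsIndepFinset G s ∧ s.card = n}

/-- A cohomomorphism from `G` to `H`: a map sending distinct non-adjacent vertices
to distinct non-adjacent vertices. -/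
def IsCohom {α β : Type*} (G : SimpleGraph α) (H : SimpleGraph β) (f : α → β) : Prop :=
  ∀ u v, u ≠ v → ¬ G.Adj u v → f u ≠ f v ∧ ¬ H.Adj (f u) (f v)

/-- Disjoint union of two simple graphs. -/
def disjUnion {α β : Type*} (G : SimpleGraph α) (H : SimpleGraph β) :
    SimpleGraph (α ⊕ β) where
  Adj x y := (∃ a b, x = Sum.inl a ∧ y = Sum.inl b ∧ G.Adj a b) ∨
             (∃ a b, x = Sum.inr a ∧ y = Sum.inr b ∧ H.Adj a b)
  symm := by
    constructor
    rintro x y (⟨a, b, rfl, rfl, h⟩ | ⟨a, b, rfl, rfl, h⟩)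
    · exact Or.inl ⟨b, a, rfl, rfl, h.symm⟩
    · exact Or.inr ⟨b, a, rfl, rfl, h.symm⟩
  loopless := by
    constructor
    rintro x (⟨a, b, rfl, heq, h⟩ | ⟨a, b, rfl, heq, h⟩) <;>
      · injection heq with h'
        subst h'
        exact h.ne rfl

/-- The open circle graph `E_r^o` on the circle `ℝ/ℤ`: distinct points are adjacent
iff their distance is strictly less than `1/r`. -/
noncomputable def openCircleGraph (r : ℝ) : SimpleGraph (AddCircle (1 : ℝ)) where
  Adj x y := x ≠ y ∧ dist x y < 1 / r
  symm := ⟨fun x y h => ⟨h.1.symm, (dist_comm y x).trans_lt h.2⟩⟩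
  loopless := ⟨fun _ h => h.1 rfl⟩

/-- The closed circle graph `E_r^c` on the circle `ℝ/ℤ`: distinct points are adjacent
iff their distance is at most `1/r`. -/
noncomputable def closedCircleGraph (r : ℝ) : SimpleGraph (AddCircle (1 : ℝ)) where
  Adj x y := x ≠ y ∧ dist x y ≤ 1 / r
  symm := ⟨fun x y h => ⟨h.1.symm, (dist_comm y x).trans_le h.2⟩⟩
  loopless := ⟨fun _ h => h.1 rfl⟩

/-- The Shannon capacity `Θ(G) = sup_{n ≥ 1} α(G^{⊠n})^{1/n}`. -/
noncomputable def shannonCapacity {α : Type*} (G : SimpleGraph α) : ℝ :=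
  ⨆ n : ℕ+, (_root_.indepNum (strongPow G n) : ℝ) ^ (((n : ℕ) : ℝ)⁻¹)

lemma zmod_val_sub (p : ℕ) [NeZero p] (A B : ZMod p) (h : B.val ≤ A.val) :
    (A - B).val = A.val - B.val := by
  have h1 : A - B = ((A.val - B.val : ℕ) : ZMod p) := by
    push_cast [h]
    simp [ZMod.natCast_val, ZMod.cast_id]
  rw [h1, ZMod.val_natCast, Nat.mod_eq_of_lt (lt_of_le_of_lt (Nat.sub_le _ _) (ZMod.val_lt A))]

lemma window_card (p q : ℕ) [NeZero p] (hq : 1 ≤ q) (hqp : q ≤ p) (y : ZMod p) :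
    (Finset.univ.filter (fun j : ZMod p => (y - j).val < q)).card = q := by
  have hset : Finset.univ.filter (fun j : ZMod p => (y - j).val < q) =
      (Finset.range q).image (fun i : ℕ => y - (i : ZMod p)) := by
    ext j
    simp only [Finset.mem_filter, Finset.mem_image, Finset.mem_range, Finset.mem_univ, true_and]
    constructor
    · intro h
      refine ⟨(y - j).val, h, ?_⟩
      simp [ZMod.natCast_val, ZMod.cast_id]
    · rintro ⟨i, hi, rfl⟩
      rw [sub_sub_cancel, ZMod.val_natCast, Nat.mod_eq_of_lt (by omega)]
      exact hi
  rw [hset, Finset.card_image_of_injOn, Finset.card_range]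
  intro i hi i' hi' h
  simp only [Finset.coe_range, Set.mem_Iio] at hi hi'
  have h1 : (i : ZMod p) = (i' : ZMod p) := sub_right_injective h
  have h2 := congrArg ZMod.val h1
  rwa [ZMod.val_natCast, ZMod.val_natCast, Nat.mod_eq_of_lt (by omega),
    Nat.mod_eq_of_lt (by omega)] at h2

lemma window_clique (p q : ℕ) [NeZero p] (hq : 1 ≤ q) (hp : 2 * q ≤ p) (j y y' : ZMod p)
    (hy : (y - j).val < q) (hy' : (y' - j).val < q) (hne : y ≠ y') :
    (fractionGraph p q).Adj y y' := by
  show _ ∧ _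
  refine ⟨hne, ?_⟩
  have hyy : y - y' = (y - j) - (y' - j) := by ring
  have hyy' : y' - y = (y' - j) - (y - j) := by ring
  rcases le_total ((y' - j).val) ((y - j).val) with h | h
  · left; rw [hyy, zmod_val_sub p _ _ h]; omega
  · right; rw [hyy', zmod_val_sub p _ _ h]; omega

lemma frac_card_bound (p q : ℕ) (hq : 1 ≤ q) (hp : 2 * q ≤ p)
    (T : Finset (ZMod p)) (hT : IsIndepFinset (fractionGraph p q) T) :
    T.card * q ≤ p := by
  haveI : NeZero p := ⟨by omega⟩
  have inner : ∀ y ∈ T, (∑ j : ZMod p, if (y - j).val < q then 1 else 0) = q := by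
    intro y _
    rw [← Finset.card_filter]
    exact window_card p q hq (by omega) y
  have count : ∑ j : ZMod p, (T.filter (fun y => (y - j).val < q)).card = T.card * q := by
    simp only [Finset.card_filter]
    rw [Finset.sum_comm, Finset.sum_congr rfl inner, Finset.sum_const, smul_eq_mul]
  have bound : ∀ j : ZMod p, (T.filter (fun y => (y - j).val < q)).card ≤ 1 := by
    intro j
    rw [Finset.card_le_one]
    intro y hy y' hy'
    simp only [Finset.mem_filter] at hy hy'
    by_contra hne
    exact hT y hy.1 y' hy'.1 hne (window_clique p q hq hp j y y' hy.2 hy'.2 hne)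
  calc T.card * q = ∑ j : ZMod p, (T.filter (fun y => (y - j).val < q)).card := count.symm
  _ ≤ ∑ _j : ZMod p, 1 := Finset.sum_le_sum (fun j _ => bound j)
  _ = p := by simp [Finset.card_univ, ZMod.card]

lemma prod_upper (p₁ q₁ p₂ q₂ : ℕ) (hq₁ : 1 ≤ q₁) (hq₂ : 1 ≤ q₂)
    (hp₁ : 2 * q₁ ≤ p₁) (hp₂ : 2 * q₂ ≤ p₂)
    (S : Finset (ZMod p₁ × ZMod p₂))
    (hS : IsIndepFinset (strongProd (fractionGraph p₁ q₁) (fractionGraph p₂ q₂)) S) :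
    S.card * q₂ ≤ (p₁ / q₁) * p₂ := by
  haveI : NeZero p₁ := ⟨by omega⟩
  haveI : NeZero p₂ := ⟨by omega⟩
  have inner : ∀ s ∈ S, (∑ j : ZMod p₂,
      if ((s : ZMod p₁ × ZMod p₂).2 - j).val < q₂ then 1 else 0) = q₂ := by
    intro s _
    rw [← Finset.card_filter]
    exact window_card p₂ q₂ hq₂ (by omega) s.2
  have count : ∑ j : ZMod p₂, (S.filter (fun s => (s.2 - j).val < q₂)).card = S.card * q₂ := by
    simp only [Finset.card_filter]
    rw [Finset.sum_comm, Finset.sum_congr rfl inner, Finset.sum_const, smul_eq_mul]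
  have strip : ∀ j : ZMod p₂, (S.filter (fun s => (s.2 - j).val < q₂)).card ≤ p₁ / q₁ := by
    intro j
    set T := S.filter (fun s => (s.2 - j).val < q₂) with hT
    have hmem : ∀ s ∈ T, s ∈ S ∧ (s.2 - j).val < q₂ := by
      intro s hs; exact Finset.mem_filter.mp hs
    have hsecond : ∀ s ∈ T, ∀ s' ∈ T, s.2 = s'.2 ∨ (fractionGraph p₂ q₂).Adj s.2 s'.2 := by
      intro s hs s' hs'
      by_cases h : s.2 = s'.2
      · exact Or.inl h
      · exact Or.inr (window_clique p₂ q₂ hq₂ hp₂ j _ _ (hmem s hs).2 (hmem s' hs').2 h)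
    have hinj : Set.InjOn Prod.fst (T : Set (ZMod p₁ × ZMod p₂)) := by
      intro s hs s' hs' h
      rw [Finset.mem_coe] at hs hs'
      by_contra hne
      exact hS s (hmem s hs).1 s' (hmem s' hs').1 hne (show _ ∧ (_ ∧ _) from ⟨hne, Or.inl h,
        hsecond s hs s' hs'⟩)
    have himage : IsIndepFinset (fractionGraph p₁ q₁) (T.image Prod.fst) := by
      intro x hx x' hx' hne hadj
      obtain ⟨s, hs, rfl⟩ := Finset.mem_image.mp hx
      obtain ⟨s', hs', rfl⟩ := Finset.mem_image.mp hx'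
      have hne' : s ≠ s' := fun h => hne (congrArg Prod.fst h)
      exact hS s (hmem s hs).1 s' (hmem s' hs').1 hne' (show _ ∧ (_ ∧ _) from ⟨hne', Or.inr hadj, hsecond s hs s' hs'⟩)
    have hcard : T.card = (T.image Prod.fst).card := (Finset.card_image_of_injOn hinj).symm
    have := frac_card_bound p₁ q₁ hq₁ hp₁ (T.image Prod.fst) himage
    rw [← hcard] at this
    exact (Nat.le_div_iff_mul_le hq₁).mpr this
  have htotal : S.card * q₂ ≤ p₂ * (p₁ / q₁) := by
    calc S.card * q₂ = ∑ j : ZMod p₂, (S.filter (fun s => (s.2 - j).val < q₂)).card := count.symm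
    _ ≤ ∑ _j : ZMod p₂, (p₁ / q₁) := Finset.sum_le_sum (fun j _ => strip j)
    _ = p₂ * (p₁ / q₁) := by simp [Finset.card_univ, ZMod.card, Finset.sum_const, smul_eq_mul]
  have hcomm : p₂ * (p₁ / q₁) = (p₁ / q₁) * p₂ := Nat.mul_comm _ _
  omega

lemma prod_swap_indep (p₁ q₁ p₂ q₂ : ℕ) (S : Finset (ZMod p₁ × ZMod p₂))
    (hS : IsIndepFinset (strongProd (fractionGraph p₁ q₁) (fractionGraph p₂ q₂)) S) :
    IsIndepFinset (strongProd (fractionGraph p₂ q₂) (fractionGraph p₁ q₁))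
      (S.image Prod.swap) := by
  intro u hu v hv hne hadj
  obtain ⟨s, hs, rfl⟩ := Finset.mem_image.mp hu
  obtain ⟨s', hs', rfl⟩ := Finset.mem_image.mp hv
  have hne' : s ≠ s' := fun h => hne (congrArg Prod.swap h)
  exact hS s hs s' hs' hne' (show _ ∧ (_ ∧ _) from ⟨hne', hadj.2.2, hadj.2.1⟩)

/-- Core arithmetic lemma for the construction. -/
lemma frac_core (p₁ q₁ p₂ q₂ N a b : ℕ) (hq₁ : 1 ≤ q₁) (hq₂ : 1 ≤ q₂)
    (hp₁ : 2 * q₁ ≤ p₁) (hp₂ : 2 * q₂ ≤ p₂)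
    (ha : a = p₁ / q₁) (hb : b = p₂ / q₂)
    (hN1 : N * q₂ ≤ a * p₂) (hN2 : N * q₁ ≤ b * p₁) (hNab : a * b ≤ N)
    (s d u : ℕ) (hu : u = s + d) (hd1 : 1 ≤ d) (hd : d < N)
    (hX : u * p₁ / N < s * p₁ / N + q₁) :
    s * (a * p₂) / N + q₂ ≤ u * (a * p₂) / N ∧
    u * (a * p₂) / N ≤ s * (a * p₂) / N + (p₂ - q₂) := by
  have hN0 : 0 < N := by omega
  have haq : a * q₁ ≤ p₁ := ha ▸ Nat.div_mul_le_self p₁ q₁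
  have hbq : b * q₂ ≤ p₂ := hb ▸ Nat.div_mul_le_self p₂ q₂
  have ha2 : 2 ≤ a := ha ▸ (Nat.le_div_iff_mul_le hq₁).mpr hp₁
  have hb2 : 2 ≤ b := hb ▸ (Nat.le_div_iff_mul_le hq₂).mpr hp₂
  have hp₁0 : 0 < p₁ := by omega
  set A := a * p₂ with hA
  -- step 1 : d * p₁ < q₁ * N
  have hsplit : s * p₁ + d * p₁ = u * p₁ := by rw [hu]; ring
  have hsuper : s * p₁ / N + d * p₁ / N ≤ u * p₁ / N := by
    calc s * p₁ / N + d * p₁ / N ≤ (s * p₁ + d * p₁) / N := Nat.add_div_le_add_div _ _ _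
    _ = u * p₁ / N := by rw [hsplit]
  have hdx : d * p₁ / N < q₁ := by omega
  have step1 : d * p₁ < q₁ * N := (Nat.div_lt_iff_lt_mul hN0).mp hdx
  -- step 2 : d * a < N
  have step2 : d * a < N := by
    by_contra h
    push_neg at h
    have h1 : N * q₁ ≤ d * a * q₁ := Nat.mul_le_mul_right _ h
    have h2 : d * (a * q₁) ≤ d * p₁ := Nat.mul_le_mul_left _ haq
    have h3 : d * a * q₁ = d * (a * q₁) := by ring
    have h4 : N * q₁ = q₁ * N := by ring
    omega
  -- step 3 : d < b
  have step3 : d < b := by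
    have h1 : q₁ * N = N * q₁ := by ring
    have h2 : d * p₁ < b * p₁ := by omega
    exact (Nat.mul_lt_mul_right hp₁0).mp h2
  -- lower bound
  have hqA : q₂ * N ≤ d * A := by
    have h1 : q₂ * N = N * q₂ := by ring
    have h2 : 1 * A ≤ d * A := Nat.mul_le_mul_right _ hd1
    have h3 : 1 * A = A := by ring
    omega
  have hlowd : q₂ ≤ d * A / N := (Nat.le_div_iff_mul_le hN0).mpr hqA
  have hsplitA : s * A + d * A = u * A := by rw [hu]; ring
  have hsuperA : s * A / N + d * A / N ≤ u * A / N := by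
    calc s * A / N + d * A / N ≤ (s * A + d * A) / N := Nat.add_div_le_add_div _ _ _
    _ = u * A / N := by rw [hsplitA]
  refine ⟨by omega, ?_⟩
  -- upper bound: key inequality d * A ≤ N * (p₂ - q₂)
  obtain ⟨e, he⟩ : ∃ e, b = d + 1 + e := ⟨b - (d + 1), by omega⟩
  obtain ⟨c, hc⟩ : ∃ c, p₂ = q₂ + c := ⟨p₂ - q₂, by omega⟩
  have hkey1 : d * p₂ ≤ b * c := by nlinarith [hbq]
  have hkey : d * A ≤ N * c := by
    have h2 : a * (d * p₂) ≤ a * (b * c) := Nat.mul_le_mul_left _ hkey1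
    have h3 : a * b * c ≤ N * c := Nat.mul_le_mul_right _ hNab
    have h4 : d * A = a * (d * p₂) := by rw [hA]; ring
    have h5 : a * (b * c) = a * b * c := by ring
    omega
  -- conclude
  obtain ⟨ru, hru, hdmu⟩ : ∃ r, r < N ∧ u * A = N * (u * A / N) + r :=
    ⟨u * A % N, Nat.mod_lt _ hN0, by rw [Nat.div_add_mod]⟩
  obtain ⟨rs, hrs, hdms⟩ : ∃ r, r < N ∧ s * A = N * (s * A / N) + r :=
    ⟨s * A % N, Nat.mod_lt _ hN0, by rw [Nat.div_add_mod]⟩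
  have hring : N * (s * A / N + c + 1) = N * (s * A / N) + N * c + N := by ring
  have hlt : N * (u * A / N) < N * (s * A / N + c + 1) := by omega
  have := Nat.lt_of_mul_lt_mul_left hlt
  omega

lemma zmod_far (p q : ℕ) (hq : 1 ≤ q) (hp : 2 * q ≤ p) (y y' : ZMod p) (W : ℕ)
    (hW : y' - y = (W : ZMod p)) (h1 : q ≤ W) (h2 : W ≤ p - q) :
    y ≠ y' ∧ ¬ (fractionGraph p q).Adj y y' := by
  haveI : NeZero p := ⟨by omega⟩
  have hv : (y' - y).val = W := by
    rw [hW, ZMod.val_natCast, Nat.mod_eq_of_lt (by omega)]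
  have hv' : (y - y').val = p - W := by
    have h3 : y - y' = ((p - W : ℕ) : ZMod p) := by
      have h4 : ((p - W : ℕ) : ZMod p) = (p : ZMod p) - (W : ZMod p) := by
        push_cast [show W ≤ p by omega]; ring
      rw [h4, ZMod.natCast_self, ← hW]; ring
    rw [h3, ZMod.val_natCast, Nat.mod_eq_of_lt (by omega)]
  have hne : y ≠ y' := by
    intro h
    rw [h, sub_self, ZMod.val_zero] at hv
    omega
  refine ⟨hne, ?_⟩
  rintro (⟨-, hlt | hlt⟩ : _ ∧ _) <;> omega

def fracPt (p₁ p₂ A N t : ℕ) : ZMod p₁ × ZMod p₂ :=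
  (((t * p₁ / N : ℕ) : ZMod p₁), ((t * A / N : ℕ) : ZMod p₂))

lemma frac_key (p₁ q₁ p₂ q₂ N a b : ℕ) (hq₁ : 1 ≤ q₁) (hq₂ : 1 ≤ q₂)
    (hp₁ : 2 * q₁ ≤ p₁) (hp₂ : 2 * q₂ ≤ p₂)
    (ha : a = p₁ / q₁) (hb : b = p₂ / q₂)
    (hN1 : N * q₂ ≤ a * p₂) (hN2 : N * q₁ ≤ b * p₁) (hNab : a * b ≤ N)
    (t t' : ℕ) (htt' : t < t') (ht' : t' < N) :
    fracPt p₁ p₂ (a * p₂) N t ≠ fracPt p₁ p₂ (a * p₂) N t' ∧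
    ¬ (strongProd (fractionGraph p₁ q₁) (fractionGraph p₂ q₂)).Adj
      (fracPt p₁ p₂ (a * p₂) N t) (fracPt p₁ p₂ (a * p₂) N t') := by
  have hN0 : 0 < N := by omega
  have hp₁0 : 0 < p₁ := by omega
  set X := t * p₁ / N with hX
  set X' := t' * p₁ / N with hX'
  set Y := t * (a * p₂) / N with hY
  set Y' := t' * (a * p₂) / N with hY'
  have hXmono : X ≤ X' := Nat.div_le_div_right (Nat.mul_le_mul_right _ (le_of_lt htt'))
  have hX'lt : X' < p₁ := by
    rw [hX', Nat.div_lt_iff_lt_mul hN0]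
    calc t' * p₁ < N * p₁ := (Nat.mul_lt_mul_right hp₁0).mpr ht'
    _ = p₁ * N := by ring
  rcases lt_or_ge X' (X + q₁) with hcase | hcase
  · -- Case B : x-coordinates close, use core lemma directly
    obtain ⟨hlow, hhigh⟩ := frac_core p₁ q₁ p₂ q₂ N a b hq₁ hq₂ hp₁ hp₂ ha hb hN1 hN2 hNab
      t (t' - t) t' (by omega) (by omega) (by omega) hcase
    have hYle : Y ≤ Y' := by omega
    have hW : (fracPt p₁ p₂ (a * p₂) N t').2 - (fracPt p₁ p₂ (a * p₂) N t).2
        = ((Y' - Y : ℕ) : ZMod p₂) := by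
      simp only [fracPt, ← hY, ← hY']
      rw [Nat.cast_sub hYle]
    have hfar := zmod_far p₂ q₂ hq₂ hp₂ _ _ _ hW (by omega) (by omega)
    constructor
    · intro h; exact hfar.1 (congrArg Prod.snd h)
    · rintro (⟨hne, -, h2 | h2⟩ : _ ∧ _ ∧ _)
      · exact hfar.1 h2
      · exact hfar.2 h2
  · rcases le_or_gt X' (X + (p₁ - q₁)) with hcase2 | hcase2
    · -- Case A : x-coordinates far apart
      have hW : (fracPt p₁ p₂ (a * p₂) N t').1 - (fracPt p₁ p₂ (a * p₂) N t).1
          = ((X' - X : ℕ) : ZMod p₁) := by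
        simp only [fracPt, ← hX, ← hX']
        rw [Nat.cast_sub hXmono]
      have hfar := zmod_far p₁ q₁ hq₁ hp₁ _ _ _ hW (by omega) (by omega)
      constructor
      · intro h; exact hfar.1 (congrArg Prod.fst h)
      · rintro (⟨hne, h1 | h1, -⟩ : _ ∧ _ ∧ _)
        · exact hfar.1 h1
        · exact hfar.2 h1
    · -- Case C : x-coordinates wrap around
      have hshift : (t + N) * p₁ / N = X + p₁ := by
        rw [hX, Nat.add_mul, Nat.mul_comm N p₁, Nat.add_mul_div_right _ _ hN0]
      have hshiftA : (t + N) * (a * p₂) / N = Y + a * p₂ := by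
        rw [hY, Nat.add_mul, Nat.mul_comm N (a * p₂), Nat.add_mul_div_right _ _ hN0]
      obtain ⟨hlow, hhigh⟩ := frac_core p₁ q₁ p₂ q₂ N a b hq₁ hq₂ hp₁ hp₂ ha hb hN1 hN2 hNab
        t' (t + N - t') (t + N) (by omega) (by omega) (by omega) (by rw [hshift]; omega)
      rw [hshiftA] at hlow hhigh
      have hYle : Y' ≤ Y + a * p₂ := by omega
      have hA0 : ((a * p₂ : ℕ) : ZMod p₂) = 0 := by
        push_cast [ZMod.natCast_self]
        ring
      have hW : (fracPt p₁ p₂ (a * p₂) N t).2 - (fracPt p₁ p₂ (a * p₂) N t').2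
          = ((Y + a * p₂ - Y' : ℕ) : ZMod p₂) := by
        simp only [fracPt, ← hY, ← hY']
        rw [Nat.cast_sub hYle]
        push_cast [hA0]
        ring
      have hfar := zmod_far p₂ q₂ hq₂ hp₂ _ _ _ hW (by omega) (by omega)
      constructor
      · intro h; exact hfar.1 (congrArg Prod.snd h).symm
      · rintro (⟨hne, -, h2 | h2⟩ : _ ∧ _ ∧ _)
        · exact hfar.1 h2.symm
        · exact hfar.2 h2.symm

lemma frac_constr (p₁ q₁ p₂ q₂ : ℕ) (hq₁ : 1 ≤ q₁) (hq₂ : 1 ≤ q₂)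
    (hp₁ : 2 * q₁ ≤ p₁) (hp₂ : 2 * q₂ ≤ p₂) :
    ∃ S : Finset (ZMod p₁ × ZMod p₂),
      IsIndepFinset (strongProd (fractionGraph p₁ q₁) (fractionGraph p₂ q₂)) S ∧
      S.card = min ((p₁ / q₁) * p₂ / q₂) ((p₂ / q₂) * p₁ / q₁) := by
  obtain ⟨a, ha⟩ : ∃ a, a = p₁ / q₁ := ⟨_, rfl⟩
  obtain ⟨b, hb⟩ : ∃ b, b = p₂ / q₂ := ⟨_, rfl⟩
  obtain ⟨N, hN⟩ : ∃ N, N = min (a * p₂ / q₂) (b * p₁ / q₁) := ⟨_, rfl⟩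
  have haq : a * q₁ ≤ p₁ := ha ▸ Nat.div_mul_le_self p₁ q₁
  have hbq : b * q₂ ≤ p₂ := hb ▸ Nat.div_mul_le_self p₂ q₂
  have ha2 : 2 ≤ a := ha ▸ (Nat.le_div_iff_mul_le hq₁).mpr hp₁
  have hb2 : 2 ≤ b := hb ▸ (Nat.le_div_iff_mul_le hq₂).mpr hp₂
  have hN1 : N * q₂ ≤ a * p₂ :=
    (Nat.le_div_iff_mul_le hq₂).mp (hN ▸ min_le_left _ _)
  have hN2 : N * q₁ ≤ b * p₁ :=
    (Nat.le_div_iff_mul_le hq₁).mp (hN ▸ min_le_right _ _)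
  have hNab : a * b ≤ N := by
    rw [hN]
    refine le_min ((Nat.le_div_iff_mul_le hq₂).mpr ?_) ((Nat.le_div_iff_mul_le hq₁).mpr ?_)
    · rw [mul_assoc]; exact Nat.mul_le_mul_left _ hbq
    · calc a * b * q₁ = b * (a * q₁) := by ring
      _ ≤ b * p₁ := Nat.mul_le_mul_left _ haq
  have key := frac_key p₁ q₁ p₂ q₂ N a b hq₁ hq₂ hp₁ hp₂ ha hb hN1 hN2 hNab
  refine ⟨(Finset.range N).image (fracPt p₁ p₂ (a * p₂) N), ?_, ?_⟩
  · intro u hu v hv hne hadj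
    obtain ⟨t, ht, rfl⟩ := Finset.mem_image.mp hu
    obtain ⟨t', ht', rfl⟩ := Finset.mem_image.mp hv
    rw [Finset.mem_range] at ht ht'
    rcases lt_trichotomy t t' with h | h | h
    · exact (key t t' h ht').2 hadj
    · exact hne (by rw [h])
    · exact (key t' t h ht).2 hadj.symm
  · rw [Finset.card_image_of_injOn, Finset.card_range, hN, ha, hb]
    intro t ht t' ht' h
    rw [Finset.coe_range, Set.mem_Iio] at ht ht'
    by_contra hne
    rcases lt_or_gt_of_ne hne with hlt | hlt
    · exact (key t t' hlt ht').1 h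
    · exact (key t' t hlt ht).1 h.symm


/-- `α(E_{p₁/q₁} ⊠ E_{p₂/q₂}) = min(⌊⌊p₁/q₁⌋ · p₂/q₂⌋, ⌊⌊p₂/q₂⌋ · p₁/q₁⌋)`. -/
theorem indepNum_strongProd_fractionGraph (p₁ q₁ p₂ q₂ : ℕ)
    (hq₁ : 1 ≤ q₁) (hq₂ : 1 ≤ q₂) (hp₁ : 2 * q₁ ≤ p₁) (hp₂ : 2 * q₂ ≤ p₂) :
    _root_.indepNum (strongProd (fractionGraph p₁ q₁) (fractionGraph p₂ q₂)) =
      min (⌊((⌊(p₁ : ℚ) / (q₁ : ℚ)⌋₊ : ℚ) * (p₂ : ℚ) / (q₂ : ℚ))⌋₊)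
          (⌊((⌊(p₂ : ℚ) / (q₂ : ℚ)⌋₊ : ℚ) * (p₁ : ℚ) / (q₁ : ℚ))⌋₊) := by
  have efloor : ∀ p q p' q' : ℕ, ⌊((⌊(p : ℚ) / (q : ℚ)⌋₊ : ℚ) * (p' : ℚ) / (q' : ℚ))⌋₊
      = (p / q) * p' / q' := by
    intro p q p' q'
    have h0 : ⌊(p : ℚ) / (q : ℚ)⌋₊ = p / q := by
      rw [Nat.floor_div_natCast, Nat.floor_natCast]
    rw [h0, show ((p / q : ℕ) : ℚ) * (p' : ℚ) = (((p / q) * p' : ℕ) : ℚ) by push_cast; ring,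
      Nat.floor_div_natCast, Nat.floor_natCast]
  rw [efloor p₁ q₁ p₂ q₂, efloor p₂ q₂ p₁ q₁]
  have hub : ∀ n ∈ {n : ℕ | ∃ s : Finset (ZMod p₁ × ZMod p₂),
      IsIndepFinset (strongProd (fractionGraph p₁ q₁) (fractionGraph p₂ q₂)) s ∧ s.card = n},
      n ≤ min ((p₁ / q₁) * p₂ / q₂) ((p₂ / q₂) * p₁ / q₁) := by
    rintro n ⟨s, hs, rfl⟩
    refine le_min ?_ ?_
    · exact (Nat.le_div_iff_mul_le hq₂).mpr (prod_upper p₁ q₁ p₂ q₂ hq₁ hq₂ hp₁ hp₂ s hs)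
    · have hsw := prod_upper p₂ q₂ p₁ q₁ hq₂ hq₁ hp₂ hp₁ (s.image Prod.swap)
        (prod_swap_indep p₁ q₁ p₂ q₂ s hs)
      rw [Finset.card_image_of_injective _ Prod.swap_injective] at hsw
      exact (Nat.le_div_iff_mul_le hq₁).mpr hsw
  obtain ⟨S, hS, hcard⟩ := frac_constr p₁ q₁ p₂ q₂ hq₁ hq₂ hp₁ hp₂
  rw [_root_.indepNum]
  apply le_antisymm
  · exact csSup_le ⟨S.card, S, hS, rfl⟩ hub
  · exact le_csSup ⟨_, hub⟩ ⟨S, hS, hcard⟩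
end

section
/- Nested floor bound: let k ≥ 1 and let p₁/q₁, …, p_k/q_k be rationals with pᵢ ≥ 2qᵢ and qᵢ ≥ 1 for all i. Define m₀ = 1 and mᵢ = ⌊m_{i−1} · pᵢ/qᵢ⌋ for i = 1, …, k. Then the independence number of the strong product E_{p₁/q₁} ⊠ E_{p₂/q₂} ⊠ ⋯ ⊠ E_{p_k/q_k} is at most m_k. -/
open SimpleGraph

section Aux

private lemma window_adj {p q : ℕ} [NeZero p] {x a b : ZMod p}
    (ha : (a - x).val < q) (hb : (b - x).val < q) :
    (a - b).val < q ∨ (b - a).val < q := by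
  rcases le_total ((b - x).val) ((a - x).val) with h | h
  · left
    have : a - b = (a - x) - (b - x) := by ring
    rw [this, ZMod.val_sub h]
    omega
  · right
    have : b - a = (b - x) - (a - x) := by ring
    rw [this, ZMod.val_sub h]
    omega

private lemma count_window {p q : ℕ} [NeZero p] (hqp : q ≤ p) (a : ZMod p) :
    (Finset.univ.filter fun x : ZMod p => (a - x).val < q).card = q := by
  have h1 : (Finset.univ.filter fun x : ZMod p => (a - x).val < q).card
      = (Finset.univ.filter fun y : ZMod p => y.val < q).card := by
    refine Finset.card_nbij' (fun x => a - x) (fun y => a - y) ?_ ?_ ?_ ?_ <;>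
      intro x hx <;> simp_all [sub_sub_cancel]
  have h2 : (Finset.univ.filter fun y : ZMod p => y.val < q).card = (Finset.range q).card := by
    refine Finset.card_nbij' (fun y => y.val) (fun n => (n : ZMod p)) ?_ ?_ ?_ ?_
    · intro y hy; simp only [Finset.mem_coe, Finset.mem_filter] at hy; simpa using hy.2
    · intro n hn
      simp only [Finset.mem_coe, Finset.mem_range] at hn
      simp [Finset.mem_filter, ZMod.val_cast_of_lt (lt_of_lt_of_le hn hqp), hn]
    · intro y _; simp [ZMod.natCast_val, ZMod.cast_id]
    · intro n hn
      simp only [Finset.mem_coe, Finset.mem_range] at hn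
      simp [ZMod.val_cast_of_lt (lt_of_lt_of_le hn hqp)]
  rw [h1, h2, Finset.card_range]

private lemma key_lemma : ∀ (k : ℕ) (p q : Fin k → ℕ), (∀ i, 1 ≤ q i) → (∀ i, 2 * q i ≤ p i) →
    ∀ (m : ℕ → ℕ), m 0 = 1 →
    (∀ i : Fin k, m ((i : ℕ) + 1) = ⌊((m (i : ℕ) : ℚ) * (p i : ℚ) / (q i : ℚ))⌋₊) →
    ∀ s : Finset (∀ i, ZMod (p i)),
      IsIndepFinset (strongProdFamily (fun i => fractionGraph (p i) (q i))) s →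
      s.card ≤ m k := by
  intro k
  induction k with
  | zero =>
    intro p q _ _ m hm0 _ s _
    rw [hm0]
    exact Finset.card_le_one.2 fun a _ b _ => Subsingleton.elim a b
  | succ k ih =>
    intro p q hq hp m hm0 hms s hs
    set P := p (Fin.last k) with hP
    set Q := q (Fin.last k) with hQ
    have hQ1 : 1 ≤ Q := hq _
    have hQP : Q ≤ P := le_trans (by omega) (hp (Fin.last k))
    haveI : NeZero P := ⟨by omega⟩
    -- fiber bound
    have fiber : ∀ x : ZMod P,
        (s.filter fun u => (u (Fin.last k) - x).val < Q).card ≤ m k := by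
      intro x
      set W := s.filter fun u => (u (Fin.last k) - x).val < Q with hW
      set f : (∀ i : Fin (k + 1), ZMod (p i)) → (∀ i : Fin k, ZMod (p i.castSucc)) :=
        fun u i => u i.castSucc with hf
      have hWmem : ∀ u ∈ W, u ∈ s ∧ (u (Fin.last k) - x).val < Q := by
        intro u hu; simpa [hW, Finset.mem_filter] using hu
      have hinj : Set.InjOn f W := by
        intro u hu v hv hfe
        by_contra hne
        obtain ⟨hus, huw⟩ := hWmem u hu
        obtain ⟨hvs, hvw⟩ := hWmem v hv
        have hlast : u (Fin.last k) ≠ v (Fin.last k) := by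
          intro he
          exact hne (funext fun i => Fin.lastCases he (fun j => congrFun hfe j) i)
        refine hs u hus v hvs hne (⟨hne, fun i => ?_⟩ : u ≠ v ∧ ∀ i, u i = v i ∨ (fractionGraph (p i) (q i)).Adj (u i) (v i))
        refine Fin.lastCases ?_ (fun j => Or.inl (congrFun hfe j)) i
        exact Or.inr ⟨hlast, window_adj huw hvw⟩
      have himg : IsIndepFinset
          (strongProdFamily (fun i : Fin k => fractionGraph (p i.castSucc) (q i.castSucc)))
          (W.image f) := by
        intro a ha b hb hab hadj
        obtain ⟨u, hu, rfl⟩ := Finset.mem_image.1 ha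
        obtain ⟨v, hv, rfl⟩ := Finset.mem_image.1 hb
        obtain ⟨hus, huw⟩ := hWmem u hu
        obtain ⟨hvs, hvw⟩ := hWmem v hv
        have hne : u ≠ v := fun h => hab (by rw [h])
        refine hs u hus v hvs hne (⟨hne, fun i => ?_⟩ : u ≠ v ∧ ∀ i, u i = v i ∨ (fractionGraph (p i) (q i)).Adj (u i) (v i))
        refine Fin.lastCases ?_ (fun j => hadj.2 j) i
        by_cases he : u (Fin.last k) = v (Fin.last k)
        · exact Or.inl he
        · exact Or.inr ⟨he, window_adj huw hvw⟩
      have hcard : W.card = (W.image f).card := (Finset.card_image_of_injOn hinj).symm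
      rw [hW] at hcard ⊢
      rw [hcard]
      refine ih (fun i => p i.castSucc) (fun i => q i.castSucc) (fun i => hq _) (fun i => hp _)
        m hm0 (fun i => by simpa using hms i.castSucc) _ himg
    -- counting
    have hsum : Q * s.card ≤ P * m k := by
      have h1 : ∑ x : ZMod P, (s.filter fun u => (u (Fin.last k) - x).val < Q).card
          = Q * s.card := by
        have : ∀ x : ZMod P, (s.filter fun u => (u (Fin.last k) - x).val < Q).card
            = ∑ u ∈ s, if (u (Fin.last k) - x).val < Q then 1 else 0 := fun x =>
          Finset.card_filter _ _
        simp_rw [this]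
        rw [Finset.sum_comm]
        have : ∀ u ∈ s, (∑ x : ZMod P, if (u (Fin.last k) - x).val < Q then 1 else 0) = Q := by
          intro u _
          rw [← Finset.card_filter]
          exact count_window hQP (u (Fin.last k))
        rw [Finset.sum_congr rfl this, Finset.sum_const, smul_eq_mul, mul_comm]
      calc Q * s.card = ∑ x : ZMod P, (s.filter fun u => (u (Fin.last k) - x).val < Q).card :=
            h1.symm
        _ ≤ ∑ _x : ZMod P, m k := Finset.sum_le_sum fun x _ => fiber x
        _ = P * m k := by rw [Finset.sum_const, smul_eq_mul, Finset.card_univ, ZMod.card]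
    -- conclude
    have hlast := hms (Fin.last k)
    simp only [Fin.val_last] at hlast
    rw [hlast]
    refine Nat.le_floor ?_
    have hQpos : (0:ℚ) < (Q:ℚ) := by exact_mod_cast hQ1
    rw [le_div_iff₀ hQpos]
    have h2 : ((Q : ℚ)) * s.card ≤ (P : ℚ) * m k := by exact_mod_cast hsum
    calc ((s.card : ℚ)) * Q = Q * s.card := by ring
      _ ≤ (P : ℚ) * m k := h2
      _ = (m k : ℚ) * P := by ring

end Aux

/-- Nested floor bound: with `m₀ = 1` and `mᵢ = ⌊m_{i−1} · pᵢ/qᵢ⌋`,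
the independence number of `E_{p₁/q₁} ⊠ ⋯ ⊠ E_{p_k/q_k}` is at most `m_k`. -/
theorem indepNum_strongProdFamily_le_nestedFloor (k : ℕ) (hk : 1 ≤ k)
    (p q : Fin k → ℕ) (hq : ∀ i, 1 ≤ q i) (hp : ∀ i, 2 * q i ≤ p i)
    (m : ℕ → ℕ) (hm0 : m 0 = 1)
    (hms : ∀ i : Fin k, m ((i : ℕ) + 1) = ⌊((m (i : ℕ) : ℚ) * (p i : ℚ) / (q i : ℚ))⌋₊) :
    _root_.indepNum (strongProdFamily (fun i => fractionGraph (p i) (q i))) ≤ m k := by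
  refine csSup_le ⟨0, (⟨∅, fun u hu => absurd hu (by simp), rfl⟩ : ∃ s : Finset _, IsIndepFinset _ s ∧ s.card = 0)⟩ ?_
  rintro n ⟨s, hind, rfl⟩
  exact key_lemma k p q hq hp m hm0 hms s hind
end

section
/- Let p, q be natural numbers with q ≥ 1, p ≥ 2q and gcd(p, q) = 1. Then every cohomomorphism f from the fraction graph E_{p/q} to itself is an automorphism of E_{p/q}: f is a bijection of ZMod p and, for all distinct u, v, u is adjacent to v in E_{p/q} if and only if f(u) is adjacent to f(v) in E_{p/q}. -/
open SimpleGraph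

private lemma vsub_le' {p : ℕ} [NeZero p] {x y : ZMod p} (h : y.val ≤ x.val) :
    (x - y).val = x.val - y.val := by
  have hx : ((x.val : ℕ) : ZMod p) = x := by simp [ZMod.natCast_val, ZMod.cast_id]
  have hy : ((y.val : ℕ) : ZMod p) = y := by simp [ZMod.natCast_val, ZMod.cast_id]
  have h1 : x - y = ((x.val - y.val : ℕ) : ZMod p) := by
    rw [Nat.cast_sub h, hx, hy]
  rw [h1, ZMod.val_cast_of_lt (by have := ZMod.val_lt x; omega)]

private lemma vneg' {p : ℕ} [NeZero p] {x y : ZMod p} (h : x ≠ y) :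
    (y - x).val = p - (x - y).val := by
  have hne : x - y ≠ 0 := sub_ne_zero_of_ne h
  have h2 : y - x = -(x - y) := by ring
  rw [h2, ZMod.neg_val, if_neg hne]

private lemma clique_bound' (p q : ℕ) (hq : 1 ≤ q) (hp : 2*q ≤ p)
    (T : Finset (ZMod p))
    (hT : ∀ u ∈ T, ∀ v ∈ T, u ≠ v → (u-v).val < q ∨ (v-u).val < q) :
    T.card ≤ q := by
  haveI : NeZero p := ⟨by omega⟩
  by_cases hcard : T.card ≤ 1
  · omega
  push_neg at hcard
  obtain ⟨u, hu, v, hv, huv⟩ := Finset.one_lt_card.mp hcard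
  classical
  set dset : Finset ℕ :=
    ((T ×ˢ T).filter fun uv => 0 < (uv.2 - uv.1).val ∧ (uv.2 - uv.1).val < q).image
      fun uv => (uv.2 - uv.1).val with hdset
  have hmem : ∀ {a b : ZMod p}, a ∈ T → b ∈ T → 0 < (b - a).val → (b - a).val < q →
      (b - a).val ∈ dset := by
    intro a b ha hb h1 h2
    exact Finset.mem_image.mpr ⟨(a, b),
      Finset.mem_filter.mpr ⟨Finset.mem_product.mpr ⟨ha, hb⟩, h1, h2⟩, rfl⟩
  have hvalpos : ∀ {a b : ZMod p}, a ≠ b → 0 < (a - b).val := by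
    intro a b hab
    rcases Nat.eq_zero_or_pos ((a-b).val) with h | h
    · exact absurd (sub_eq_zero.mp ((ZMod.val_eq_zero _).mp h)) hab
    · exact h
  have hne : dset.Nonempty := by
    rcases hT u hu v hv huv with h | h
    · exact ⟨_, hmem hv hu (hvalpos huv) h⟩
    · exact ⟨_, hmem hu hv (hvalpos huv.symm) h⟩
  set d := dset.max' hne with hd_def
  have hd : d ∈ dset := dset.max'_mem hne
  have hmax : ∀ {x y : ZMod p}, x ∈ T → y ∈ T → 0 < (y-x).val → (y-x).val < q →
      (y-x).val ≤ d := fun hx hy h1 h2 => dset.le_max' _ (hmem hx hy h1 h2)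
  obtain ⟨⟨a, b⟩, habmem, hab⟩ := Finset.mem_image.mp hd
  obtain ⟨hprodm, hd1, hd2⟩ := Finset.mem_filter.mp habmem
  obtain ⟨ha, hb⟩ := Finset.mem_product.mp hprodm
  simp only at hab hd1 hd2
  rw [hab] at hd1 hd2
  set φ : ZMod p → ℕ := fun t => (t - a).val with hφ
  have hφb : φ b = d := hab
  have hφa : φ a = 0 := by simp [hφ]
  have hφlt : ∀ t, φ t < p := fun t => ZMod.val_lt _
  have hφinj : ∀ x ∈ T, ∀ y ∈ T, φ x = φ y → x = y := by
    intro x _ y _ h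
    have := ZMod.val_injective p h
    exact sub_left_injective this
  have hclaim : ∀ t ∈ T, φ t ≤ d ∨ (p < φ t + q ∧ φ t < q + d) := by
    intro t ht
    by_cases hta : t = a
    · left; simp [hta, hφa]
    by_cases hlt : φ t < q
    · left; exact hmax ha ht (hvalpos hta) hlt
    · -- φ t ≥ q; from adjacency with a: (a - t).val < q
      right
      have hadj := hT a ha t ht (Ne.symm hta)
      have hneg : (a - t).val = p - (t - a).val := vneg' hta
      have hφt : φ t = (t - a).val := rfl
      have hplt := hφlt t
      have h1 : p < φ t + q := by
        rcases hadj with h | h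
        · have hpos := hvalpos (Ne.symm hta)
          omega
        · exact absurd h hlt
      refine ⟨h1, ?_⟩
      have htb : t ≠ b := by
        intro h; rw [h] at hlt; rw [hφb] at hlt; omega
      have hvtb : (t - b).val = φ t - d := by
        have heq : (t - a) - (b - a) = t - b := by ring
        have := vsub_le' (x := t - a) (y := b - a) (by rw [hab]; omega)
        rw [heq] at this
        rw [this, hab]
      rcases hT t ht b hb htb with h | h
      · -- (t - b).val < q
        rw [hvtb] at h; omega
      · -- (b - t).val < q : contradiction with maximality
        have hbt : (b - t).val = p - (φ t - d) := by rw [vneg' htb, hvtb]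
        have := hmax ht hb (hvalpos (Ne.symm htb)) h
        rw [hbt] at this
        omega
  -- split into head and tail
  set Th := T.filter (fun t => φ t ≤ d) with hTh
  set Tt := T.filter (fun t => ¬ φ t ≤ d) with hTt
  have hsplit : Th.card + Tt.card = T.card :=
    Finset.card_filter_add_card_filter_not _
  have hheadmem : ∀ t ∈ Th, t ∈ T ∧ φ t ≤ d := fun t ht => by
    obtain ⟨h1, h2⟩ := Finset.mem_filter.mp ht; exact ⟨h1, h2⟩
  have htail : ∀ t ∈ Tt, t ∈ T ∧ p < φ t + q ∧ φ t < q + d := by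
    intro t ht
    obtain ⟨h1, h2⟩ := Finset.mem_filter.mp ht
    rcases hclaim t h1 with h | h
    · exact absurd h h2
    · exact ⟨h1, h⟩
  set A := Th.image φ with hA
  have hAcard : A.card = Th.card := Finset.card_image_of_injOn
    (fun x hx y hy h => hφinj x (hheadmem x hx).1 y (hheadmem y hy).1 h)
  have hAsub : A ⊆ Finset.range (d+1) := by
    intro x hx
    obtain ⟨t, ht, rfl⟩ := Finset.mem_image.mp hx
    exact Finset.mem_range.mpr (by have := (hheadmem t ht).2; omega)
  by_cases htt : Tt = ∅
  · have : T.card = Th.card := by rw [← hsplit, htt]; simp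
    rw [this, ← hAcard]
    calc A.card ≤ (Finset.range (d+1)).card := Finset.card_le_card hAsub
    _ = d + 1 := Finset.card_range _
    _ ≤ q := by omega
  · obtain ⟨t0, ht0⟩ := Finset.nonempty_iff_ne_empty.mpr htt
    set J := Tt.image φ with hJ
    have hJne : J.Nonempty := ⟨φ t0, Finset.mem_image_of_mem φ ht0⟩
    have hJcard : J.card = Tt.card := Finset.card_image_of_injOn
      (fun x hx y hy h => hφinj x (htail x hx).1 y (htail y hy).1 h)
    have hJfact : ∀ j ∈ J, p < j + q ∧ j < q + d := by
      intro j hj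
      obtain ⟨t, ht, rfl⟩ := Finset.mem_image.mp hj
      exact (htail t ht).2
    set j0 := J.min' hJne with hj0def
    have hj0 := J.min'_mem hJne
    have hj0f := hJfact j0 hj0
    -- window fact
    have hwin : ∀ h ∈ Th, ∀ t ∈ Tt, ¬ (q + φ h ≤ φ t ∧ φ t + q ≤ p + φ h) := by
      rintro h hh t ht ⟨hw1, hw2⟩
      obtain ⟨hhT, hhd⟩ := hheadmem h hh
      obtain ⟨htT, ht1, ht2⟩ := htail t ht
      have hneq : h ≠ t := by
        intro he; rw [he] at hhd; omega
      have hvth : (t - h).val = φ t - φ h := by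
        have heq : (t - a) - (h - a) = t - h := by ring
        have := vsub_le' (x := t - a) (y := h - a) (by show φ h ≤ φ t; omega)
        rw [heq] at this; exact this
      have hvht : (h - t).val = p - (φ t - φ h) := by
        rw [vneg' (Ne.symm hneq), hvth]
      rcases hT h hhT t htT hneq with hc | hc
      · rw [hvht] at hc; omega
      · rw [hvth] at hc; omega
    set B := J.image (fun j => j - q) with hB
    have hBcard : B.card = J.card := Finset.card_image_of_injOn (by
      intro x hx y hy h
      have h1 := hJfact x hx
      have h2 := hJfact y hy
      simp only at h
      omega)
    set C := Finset.Ico (j0 - (p - q)) (j0 - q) with hC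
    have hCcard : C.card = p - 2*q := by
      rw [Nat.card_Ico]; omega
    have hBsub : B ⊆ Finset.range (d+1) := by
      intro x hx
      obtain ⟨j, hj, rfl⟩ := Finset.mem_image.mp hx
      have := hJfact j hj
      exact Finset.mem_range.mpr (by omega)
    have hCsub : C ⊆ Finset.range (d+1) := by
      intro x hx
      obtain ⟨h1, h2⟩ := Finset.mem_Ico.mp hx
      exact Finset.mem_range.mpr (by omega)
    have hdAB : Disjoint A B := by
      rw [Finset.disjoint_left]
      rintro x hxA hxB
      obtain ⟨h, hh, rfl⟩ := Finset.mem_image.mp hxA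
      obtain ⟨j, hj, hjq⟩ := Finset.mem_image.mp hxB
      obtain ⟨t, ht, rfl⟩ := Finset.mem_image.mp hj
      have hf1 := hJfact (φ t) (Finset.mem_image_of_mem φ ht)
      exact hwin h hh t ht ⟨by omega, by omega⟩
    have hdAC : Disjoint A C := by
      rw [Finset.disjoint_left]
      rintro x hxA hxC
      obtain ⟨h, hh, rfl⟩ := Finset.mem_image.mp hxA
      obtain ⟨h1, h2⟩ := Finset.mem_Ico.mp hxC
      obtain ⟨t0', ht0', hj0eq⟩ := Finset.mem_image.mp hj0
      exact hwin h hh t0' ht0' ⟨by omega, by omega⟩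
    have hdBC : Disjoint B C := by
      rw [Finset.disjoint_left]
      rintro x hxB hxC
      obtain ⟨j, hj, rfl⟩ := Finset.mem_image.mp hxB
      obtain ⟨h1, h2⟩ := Finset.mem_Ico.mp hxC
      have hge := J.min'_le j hj
      have := hJfact j hj
      omega
    have hunion : (A ∪ B ∪ C).card = A.card + B.card + C.card := by
      rw [Finset.card_union_of_disjoint (by
        rw [Finset.disjoint_union_left]; exact ⟨hdAC, hdBC⟩),
        Finset.card_union_of_disjoint hdAB]
    have hsubU : A ∪ B ∪ C ⊆ Finset.range (d+1) := by
      intro x hx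
      rcases Finset.mem_union.mp hx with hx | hx
      · rcases Finset.mem_union.mp hx with hx | hx
        · exact hAsub hx
        · exact hBsub hx
      · exact hCsub hx
    have hle : A.card + B.card + C.card ≤ d + 1 := by
      rw [← hunion]
      calc (A ∪ B ∪ C).card ≤ (Finset.range (d+1)).card := Finset.card_le_card hsubU
      _ = d + 1 := Finset.card_range _
    rw [hAcard, hBcard, hJcard, hCcard] at hle
    omega



private lemma frac_adj (p q : ℕ) (u v : ZMod p) :
    (fractionGraph p q).Adj u v ↔ u ≠ v ∧ ((u - v).val < q ∨ (v - u).val < q) :=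
  Iff.rfl

/-- If `gcd(p, q) = 1` then every cohomomorphism from `E_{p/q}` to itself is an
automorphism of `E_{p/q}`. -/
theorem cohom_fractionGraph_self_isAutomorphism (p q : ℕ)
    (hq : 1 ≤ q) (hp : 2 * q ≤ p) (hgcd : Nat.gcd p q = 1)
    (f : ZMod p → ZMod p) (hf : IsCohom (fractionGraph p q) (fractionGraph p q) f) :
    Function.Bijective f ∧ ∀ u v : ZMod p, u ≠ v →
      ((fractionGraph p q).Adj u v ↔ (fractionGraph p q).Adj (f u) (f v)) := by
  haveI : NeZero p := ⟨by omega⟩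
  classical
  have hcardZ : Fintype.card (ZMod p) = p := ZMod.card p
  -- arc counting
  have hcount : ∀ y : ZMod p,
      (Finset.univ.filter fun x : ZMod p => (y - x).val < q).card = q := by
    intro y
    have himg : (Finset.univ.filter fun x : ZMod p => (y - x).val < q) =
        (Finset.range q).image (fun i : ℕ => y - (i : ZMod p)) := by
      ext x
      simp only [Finset.mem_filter, Finset.mem_univ, true_and, Finset.mem_image,
        Finset.mem_range]
      constructor
      · intro hx
        refine ⟨(y - x).val, hx, ?_⟩
        have : (((y - x).val : ℕ) : ZMod p) = y - x := by
          simp [ZMod.natCast_val, ZMod.cast_id]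
        rw [this]; ring
      · rintro ⟨i, hi, rfl⟩
        have : y - (y - (i : ZMod p)) = (i : ZMod p) := by ring
        rw [this, ZMod.val_cast_of_lt (by omega)]
        exact hi
    rw [himg, Finset.card_image_of_injOn, Finset.card_range]
    intro i hi j hj hij
    simp only [Finset.coe_range, Set.mem_Iio] at hi hj
    have : (i : ZMod p) = (j : ZMod p) := by
      have := sub_right_injective (G := ZMod p) hij
      exact this
    have hvi := ZMod.val_cast_of_lt (n := p) (a := i) (by omega)
    have hvj := ZMod.val_cast_of_lt (n := p) (a := j) (by omega)
    rw [← hvi, ← hvj, this]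
  set Bx : ZMod p → Finset (ZMod p) :=
    fun x => Finset.univ.filter fun v => (f v - x).val < q with hBx
  set Fib : ZMod p → Finset (ZMod p) :=
    fun x => Finset.univ.filter fun v => f v = x with hFib
  -- sum of Bx cards
  have hsum : ∑ x : ZMod p, (Bx x).card = p * q := by
    have : ∀ x : ZMod p, (Bx x).card =
        ∑ v : ZMod p, if (f v - x).val < q then 1 else 0 := by
      intro x; rw [hBx]; exact Finset.card_filter _ _
    rw [Finset.sum_congr rfl fun x _ => this x, Finset.sum_comm]
    have hrow : ∀ v : ZMod p,
        (∑ x : ZMod p, if (f v - x).val < q then 1 else 0) = q := by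
      intro v
      rw [← Finset.card_filter]
      exact hcount (f v)
    rw [Finset.sum_congr rfl fun v _ => hrow v, Finset.sum_const, Finset.card_univ, hcardZ, smul_eq_mul]
  -- each Bx is a clique in the fraction graph
  have hBle : ∀ x, (Bx x).card ≤ q := by
    intro x
    apply clique_bound' p q hq hp
    intro u hu v hv huv
    by_contra hnadj
    push_neg at hnadj
    obtain ⟨h1, h2⟩ := hnadj
    have hG : ¬ (fractionGraph p q).Adj u v := by
      rw [frac_adj]; push_neg; intro _; omega
    obtain ⟨hfne, hfnadj⟩ := hf u v huv hG
    have hu' : (f u - x).val < q := (Finset.mem_filter.mp hu).2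
    have hv' : (f v - x).val < q := (Finset.mem_filter.mp hv).2
    apply hfnadj
    rw [frac_adj]
    refine ⟨hfne, ?_⟩
    rcases le_total ((f v - x).val) ((f u - x).val) with hle | hle
    · left
      have heq : (f u - x) - (f v - x) = f u - f v := by ring
      have := vsub_le' (x := f u - x) (y := f v - x) hle
      rw [heq] at this
      omega
    · right
      have heq : (f v - x) - (f u - x) = f v - f u := by ring
      have := vsub_le' (x := f v - x) (y := f u - x) hle
      rw [heq] at this
      omega
  -- all Bx have size exactly q
  have hBeq : ∀ x, (Bx x).card = q := by
    by_contra hcon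
    push_neg at hcon
    obtain ⟨x, hx⟩ := hcon
    have hlt : (Bx x).card < q := lt_of_le_of_ne (hBle x) hx
    have : ∑ y : ZMod p, (Bx y).card < ∑ _y : ZMod p, q :=
      Finset.sum_lt_sum (fun i _ => hBle i) ⟨x, Finset.mem_univ x, hlt⟩
    rw [hsum, Finset.sum_const, Finset.card_univ, hcardZ, smul_eq_mul] at this
    omega
  -- fiber cardinality relation
  have hfib : ∀ x : ZMod p, (Fib x).card = (Fib (x + (q : ZMod p))).card := by
    intro x
    have hP := Finset.card_filter_add_card_filter_not
      (s := Bx x) (p := fun v => (f v - (x+1)).val < q)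
    have hQ := Finset.card_filter_add_card_filter_not
      (s := Bx (x+1)) (p := fun v => (f v - x).val < q)
    have hinter : (Bx x).filter (fun v => (f v - (x+1)).val < q) =
        (Bx (x+1)).filter (fun v => (f v - x).val < q) := by
      rw [hBx]; ext v
      simp only [Finset.mem_filter, Finset.mem_univ, true_and]
      tauto
    have hone : (1 : ZMod p).val = 1 := by
      have h := ZMod.val_cast_of_lt (n := p) (a := 1) (by omega)
      simpa using h
    have hFx : (Bx x).filter (fun v => ¬ (f v - (x+1)).val < q) = Fib x := by
      rw [hBx, hFib]
      ext v
      simp only [Finset.mem_filter, Finset.mem_univ, true_and, not_lt]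
      constructor
      · rintro ⟨h1, h2⟩
        by_contra hne
        have hvne : f v ≠ x := hne
        have h0 : 0 < (f v - x).val := by
          rcases Nat.eq_zero_or_pos (f v - x).val with h | h
          · exact absurd (sub_eq_zero.mp ((ZMod.val_eq_zero _).mp h)) hvne
          · exact h
        have heq : (f v - x) - 1 = f v - (x + 1) := by ring
        have := vsub_le' (x := f v - x) (y := (1 : ZMod p)) (by rw [hone]; omega)
        rw [heq, hone] at this
        omega
      · intro h
        rw [h]
        constructor
        · rw [sub_self, ZMod.val_zero]; omega
        · have heq : x - (x + 1) = -(1 : ZMod p) := by ring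
          rw [heq, ZMod.neg_val, if_neg (by
            intro h1
            have := congrArg ZMod.val h1
            rw [hone, ZMod.val_zero] at this
            omega), hone]
          omega
    have hFxq : (Bx (x+1)).filter (fun v => ¬ (f v - x).val < q) =
        Fib (x + (q : ZMod p)) := by
      rw [hBx, hFib]
      ext v
      simp only [Finset.mem_filter, Finset.mem_univ, true_and, not_lt]
      constructor
      · rintro ⟨h1, h2⟩
        have heq : (f v - (x+1)) + 1 = f v - x := by ring
        have hval : (f v - x).val = (f v - (x+1)).val + 1 := by
          have h3 : ((f v - (x+1)) + 1).val = ((f v - (x+1)).val + (1 : ZMod p).val) % p :=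
            ZMod.val_add _ _
          rw [heq] at h3
          rw [h3, hone]
          exact Nat.mod_eq_of_lt (by omega)
        have hq1 : (f v - (x+1)).val = q - 1 := by omega
        have : f v - (x+1) = ((q - 1 : ℕ) : ZMod p) := by
          have := ZMod.val_cast_of_lt (a := q - 1) (n := p) (by omega)
          exact ZMod.val_injective p (by rw [hq1, this])
        have : f v = x + 1 + ((q - 1 : ℕ) : ZMod p) := by
          rw [← this]; ring
        rw [this]
        have hcast : (1 : ZMod p) + ((q - 1 : ℕ) : ZMod p) = (q : ZMod p) := by
          have : ((1 + (q - 1) : ℕ) : ZMod p) = (q : ZMod p) := by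
            congr 1; omega
          push_cast at this
          linear_combination this
        rw [add_assoc, hcast]
      · intro h
        rw [h]
        have h1 : x + (q : ZMod p) - (x + 1) = ((q - 1 : ℕ) : ZMod p) := by
          have : ((q - 1 : ℕ) : ZMod p) = (q : ZMod p) - 1 := by
            have : ((q - 1 : ℕ) + 1 : ℕ) = q := by omega
            calc ((q - 1 : ℕ) : ZMod p) = ((q - 1 : ℕ) + 1 : ℕ) - 1 := by push_cast; ring
            _ = (q : ZMod p) - 1 := by rw [this]
          rw [this]; ring
        have h2 : x + (q : ZMod p) - x = (q : ZMod p) := by ring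
        constructor
        · rw [h1, ZMod.val_cast_of_lt (by omega)]; omega
        · rw [h2, ZMod.val_cast_of_lt (by omega)]
    rw [hinter] at hP
    rw [hFx] at hP
    rw [hFxq] at hQ
    rw [hBeq x] at hP
    rw [hBeq (x+1)] at hQ
    omega
  -- propagate along multiples of q
  have hfibn : ∀ (n : ℕ) (x : ZMod p), (Fib x).card = (Fib (x + (n : ℕ) * (q : ZMod p))).card := by
    intro n
    induction n with
    | zero => intro x; simp
    | succ n ih =>
      intro x
      have h1 := hfib x
      have h2 := ih (x + (q : ZMod p))
      rw [h1, h2]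
      congr 1
      push_cast
      ring
  have hfiball : ∀ x y : ZMod p, (Fib x).card = (Fib y).card := by
    intro x y
    have hu : IsUnit (q : ZMod p) := by
      rw [ZMod.isUnit_iff_coprime]
      exact Nat.coprime_comm.mp hgcd
    obtain ⟨u, hu⟩ := hu
    have : ∃ c : ZMod p, c * (q : ZMod p) = y - x :=
      ⟨(y - x) * ↑u⁻¹, by
        rw [mul_assoc]
        have : (↑u⁻¹ * (q : ZMod p)) = 1 := by rw [← hu]; exact u.inv_mul
        rw [this, mul_one]⟩
    obtain ⟨c, hc⟩ := this
    have hcv : ((c.val : ℕ) : ZMod p) = c := by simp [ZMod.natCast_val, ZMod.cast_id]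
    have := hfibn c.val x
    rw [this]
    congr 1
    rw [hcv, hc]
    ring
  have hsumfib : ∑ x : ZMod p, (Fib x).card = p := by
    have : ∀ x : ZMod p, (Fib x).card =
        ∑ v : ZMod p, if f v = x then 1 else 0 := by
      intro x; rw [hFib]; exact Finset.card_filter _ _
    rw [Finset.sum_congr rfl fun x _ => this x, Finset.sum_comm]
    have hrow : ∀ v : ZMod p, (∑ x : ZMod p, if f v = x then 1 else 0) = 1 := by
      intro v
      rw [Finset.sum_ite_eq]
      simp
    rw [Finset.sum_congr rfl fun v _ => hrow v, Finset.sum_const, Finset.card_univ,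
      hcardZ, smul_eq_mul, mul_one]
  have hfib1 : ∀ x : ZMod p, (Fib x).card = 1 := by
    have hconst : ∀ x : ZMod p, (Fib x).card = (Fib 0).card := fun x => hfiball x 0
    have : ∑ x : ZMod p, (Fib x).card = p * (Fib 0).card := by
      rw [Finset.sum_congr rfl fun x _ => hconst x, Finset.sum_const, Finset.card_univ,
        hcardZ, smul_eq_mul]
    rw [hsumfib] at this
    intro x
    rw [hconst x]
    have hp0 : 0 < p := by omega
    exact Nat.eq_of_mul_eq_mul_left hp0 (by rw [mul_one, ← this])
  have hinj : Function.Injective f := by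
    intro u v huv
    have h1 := hfib1 (f u)
    have hu : u ∈ Fib (f u) := by rw [hFib]; simp
    have hv : v ∈ Fib (f u) := by rw [hFib]; simp [huv]
    exact Finset.card_le_one.mp (le_of_eq h1) u hu v hv
  have hbij : Function.Bijective f := Finite.injective_iff_bijective.mp hinj
  refine ⟨hbij, ?_⟩
  -- non-adjacent pairs are preserved bidirectionally
  set N : Finset (ZMod p × ZMod p) :=
    Finset.univ.filter fun uv => uv.1 ≠ uv.2 ∧ ¬ (fractionGraph p q).Adj uv.1 uv.2 with hN
  have hmapsto : ∀ uv ∈ N, (f uv.1, f uv.2) ∈ N := by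
    rintro ⟨u, v⟩ huv
    obtain ⟨_, h1, h2⟩ := Finset.mem_filter.mp huv
    obtain ⟨h3, h4⟩ := hf u v h1 h2
    exact Finset.mem_filter.mpr ⟨Finset.mem_univ _, h3, h4⟩
  have hpinj : Function.Injective (fun uv : ZMod p × ZMod p => (f uv.1, f uv.2)) := by
    rintro ⟨a, b⟩ ⟨c, d⟩ h
    simp only [Prod.mk.injEq] at h
    exact Prod.ext (hinj h.1) (hinj h.2)
  have himg : N.image (fun uv => (f uv.1, f uv.2)) = N := by
    apply Finset.eq_of_subset_of_card_le
    · intro x hx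
      obtain ⟨uv, huv, rfl⟩ := Finset.mem_image.mp hx
      exact hmapsto uv huv
    · rw [Finset.card_image_of_injective _ hpinj]
  have key : ∀ a b : ZMod p, a ≠ b → ¬ (fractionGraph p q).Adj (f a) (f b) →
      ¬ (fractionGraph p q).Adj a b := by
    intro a b hab hnadj
    have hmem : (f a, f b) ∈ N :=
      Finset.mem_filter.mpr ⟨Finset.mem_univ _, hinj.ne hab, hnadj⟩
    rw [← himg] at hmem
    obtain ⟨⟨a', b'⟩, hm, heq⟩ := Finset.mem_image.mp hmem
    simp only [Prod.mk.injEq] at heq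
    obtain ⟨h1, h2⟩ := heq
    have ha : a' = a := hinj h1
    have hb : b' = b := hinj h2
    obtain ⟨_, _, hm2⟩ := Finset.mem_filter.mp hm
    rw [ha, hb] at hm2
    exact hm2
  intro u v huv
  constructor
  · intro hadj
    by_contra hn
    exact key u v huv hn hadj
  · intro hadj
    by_contra hn
    exact (hf u v huv hn).2 hadj
end

section
/- Let p, q be natural numbers with q ≥ 2, p ≥ 2q and gcd(p, q) = 1, and let f : ZMod p → ZMod p be a cohomomorphism from the fraction graph E_{p/q} to itself. Then there exists a ∈ ZMod p such that either f(x) = a + x for all x, or f(x) = a − x for all x. -/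
open SimpleGraph

section CohomHelpers
open Finset


variable {p : ℕ}

def zarc (a : ZMod p) (n : ℕ) : Finset (ZMod p) := (Finset.range n).image (fun j : ℕ => a + (j : ZMod p))

lemma natCast_val_eq [NeZero p] (a : ZMod p) : ((a.val : ℕ) : ZMod p) = a := by
  simp [ZMod.natCast_val, ZMod.cast_id]

lemma mem_zarc [NeZero p] {a y : ZMod p} {n : ℕ} (hn : n ≤ p) :
    y ∈ zarc a n ↔ (y - a).val < n := by
  constructor
  · rintro hy
    simp only [zarc, mem_image, mem_range] at hy
    obtain ⟨j, hj, rfl⟩ := hy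
    simpa [ZMod.val_cast_of_lt (lt_of_lt_of_le hj hn)] using hj
  · intro h
    simp only [zarc, mem_image, mem_range]
    exact ⟨(y - a).val, h, by rw [natCast_val_eq]; ring⟩

lemma card_zarc [NeZero p] (a : ZMod p) {n : ℕ} (hn : n ≤ p) : (zarc a n).card = n := by
  rw [zarc, Finset.card_image_of_injOn, Finset.card_range]
  intro i hi j hj hij
  simp only [Finset.coe_range, Set.mem_Iio] at hi hj
  have : ((i : ZMod p)) = j := by
    have := hij; simpa using this
  have := congrArg ZMod.val this
  rwa [ZMod.val_cast_of_lt (lt_of_lt_of_le hi hn), ZMod.val_cast_of_lt (lt_of_lt_of_le hj hn)] at this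

lemma val_add_val [NeZero p] {a b : ZMod p} (h : a ≠ 0) (h2 : b = -a) : a.val + b.val = p := by
  subst h2
  haveI : NeZero a := ⟨h⟩
  have := ZMod.val_neg_of_ne_zero a
  have hlt := ZMod.val_lt a
  have hpos : 0 < a.val := by
    rcases Nat.eq_zero_or_pos a.val with h0 | h0
    · exact absurd (by rw [← natCast_val_eq a, h0]; simp) h
    · exact h0
  omega

lemma val_sub_add_val_sub [NeZero p] {u v : ZMod p} (h : u ≠ v) :
    (u - v).val + (v - u).val = p := by
  apply val_add_val (sub_ne_zero.mpr h); ring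

/-- Lemma A: a clique in the fraction graph has at most `q` elements,
and a `q`-element clique is an arc. -/
theorem clique_struct {q : ℕ} (hq : 2 ≤ q) (hp : 2*q+1 ≤ p) (S : Finset (ZMod p))
    (hS : ∀ u ∈ S, ∀ v ∈ S, u ≠ v → ((u-v).val < q ∨ (v-u).val < q)) :
    S.card ≤ q ∧ (S.card = q → ∃ a, S = zarc a q) := by
  haveI : NeZero p := ⟨by omega⟩
  rcases S.eq_empty_or_nonempty with rfl | hSne
  · refine ⟨by simp, fun h => ?_⟩
    exfalso; simp at h; omega
  obtain ⟨s₀, hs₀⟩ := hSne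
  by_cases hcase : ∃ b ∈ S, ∀ s ∈ S, (b - s).val < q
  · -- Case 1: all of S lies "behind" b
    obtain ⟨b, hb, hball⟩ := hcase
    have hsub : S ⊆ zarc (b + 1 - (q:ZMod p)) q := by
      intro y hy
      rw [mem_zarc (by omega)]
      have ht := hball y hy
      set t := (b - y).val with htdef
      have hby : b - y = (t : ZMod p) := (natCast_val_eq _).symm
      have : y - (b + 1 - (q:ZMod p)) = ((q - 1 - t : ℕ) : ZMod p) := by
        have h1 : ((q - 1 - t : ℕ) : ZMod p) = (q:ZMod p) - 1 - (t:ZMod p) := by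
          push_cast [Nat.cast_sub (by omega : t ≤ q - 1), Nat.cast_sub (by omega : 1 ≤ q)]
          ring
        rw [h1, ← hby]; ring
      rw [this, ZMod.val_cast_of_lt (by omega)]
      omega
    have hcard : S.card ≤ q := by
      have := Finset.card_le_card hsub
      rwa [card_zarc _ (by omega)] at this
    refine ⟨hcard, fun hEq => ⟨b + 1 - (q:ZMod p), ?_⟩⟩
    apply Finset.eq_of_subset_of_card_le hsub
    rw [card_zarc _ (by omega), hEq]
  · -- Case 2: every b ∈ S has a forward neighbour within distance < q
    push_neg at hcase
    have hfw : ∀ b ∈ S, ∃ s ∈ S, 0 < (s - b).val ∧ (s - b).val < q := by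
      intro b hb
      obtain ⟨s, hs, hqs⟩ := hcase b hb
      have hne : s ≠ b := by
        intro h; subst h; simp [ZMod.val_zero] at hqs; omega
      have hlt : (s - b).val < q := by
        rcases hS b hb s hs (Ne.symm hne) with h | h
        · omega
        · exact h
      have hpos : 0 < (s - b).val := by
        rcases Nat.eq_zero_or_pos (s - b).val with h0 | h0
        · exfalso
          have : s - b = 0 := by rw [← natCast_val_eq (s - b), h0]; simp
          exact hne (by linear_combination this)
        · exact h0
      exact ⟨s, hs, hpos, hlt⟩
    -- gap function
    have gapEx : ∀ b : ZMod p, ∃ t : ℕ, 0 < t ∧ b + (t : ZMod p) ∈ S := by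
      intro b
      rcases Nat.eq_zero_or_pos (s₀ - b).val with h0 | h0
      · refine ⟨p, by omega, ?_⟩
        have hsb : s₀ = b := by
          have : s₀ - b = 0 := by rw [← natCast_val_eq (s₀ - b), h0]; simp
          linear_combination this
        rw [ZMod.natCast_self, add_zero, ← hsb]; exact hs₀
      · exact ⟨(s₀ - b).val, h0, by rw [natCast_val_eq]; simpa using hs₀⟩
    set gap : ZMod p → ℕ := fun b => Nat.find (gapEx b) with hgap
    have gap_pos : ∀ b, 0 < gap b := fun b => (Nat.find_spec (gapEx b)).1
    have gap_mem : ∀ b, b + (gap b : ZMod p) ∈ S := fun b => (Nat.find_spec (gapEx b)).2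
    have gap_min : ∀ (b : ZMod p) (t : ℕ), 0 < t → b + (t : ZMod p) ∈ S → gap b ≤ t :=
      fun b t h1 h2 => Nat.find_le ⟨h1, h2⟩
    have gap_lt_q : ∀ b ∈ S, gap b < q := by
      intro b hb
      obtain ⟨s, hs, h1, h2⟩ := hfw b hb
      have := gap_min b (s - b).val h1 (by rw [natCast_val_eq]; simpa using hs)
      omega
    -- sum of gaps is p
    have predEx : ∀ x : ZMod p, ∃ t : ℕ, x - (t : ZMod p) ∈ S :=
      fun x => ⟨(x - s₀).val, by rw [natCast_val_eq]; simpa using hs₀⟩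
    set e : ZMod p → ℕ := fun x => Nat.find (predEx x) with he
    set pr : ZMod p → ZMod p := fun x => x - (e x : ZMod p) with hpr
    have pr_mem : ∀ x, pr x ∈ S := fun x => Nat.find_spec (predEx x)
    have fiber_eq : ∀ s ∈ S, univ.filter (fun x => pr x = s) = zarc s (gap s) := by
      intro s hs
      ext x
      simp only [mem_filter, mem_univ, true_and]
      constructor
      · intro hx
        have hxe : x = s + (e x : ZMod p) := by rw [← hx]; simp [hpr]
        have helt : e x < gap s := by
          by_contra hge
          push_neg at hge
          have hmem : x - ((e x - gap s : ℕ) : ZMod p) ∈ S := by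
            have hcast : ((e x - gap s : ℕ) : ZMod p) = (e x : ZMod p) - (gap s : ZMod p) := by
              rw [Nat.cast_sub hge]
            rw [hcast]
            have heq2 : x - ((e x : ZMod p) - (gap s : ZMod p)) = pr x + (gap s : ZMod p) := by
              simp only [hpr]; ring
            rw [heq2, hx]; exact gap_mem s
          rcases Nat.lt_or_ge (e x - gap s) (e x) with hlt | hge2
          · exact Nat.find_min (predEx x) hlt hmem
          · have := gap_pos s; omega
        rw [mem_zarc (by have := gap_lt_q s hs; omega)]
        rw [hxe]
        have : s + (e x : ZMod p) - s = ((e x : ℕ) : ZMod p) := by ring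
        rw [this, ZMod.val_cast_of_lt (by have := gap_lt_q s hs; omega)]
        exact helt
      · intro hx
        rw [mem_zarc (by have := gap_lt_q s hs; omega)] at hx
        set j := (x - s).val with hj
        have hxj : x = s + (j : ZMod p) := by rw [natCast_val_eq]; ring
        have hejle : e x ≤ j := Nat.find_le (by rw [hxj]; simpa using hs)
        have hej : e x = j := by
          by_contra hne
          have hlt : e x < j := by omega
          have hmem := pr_mem x
          have : pr x = s + ((j - e x : ℕ) : ZMod p) := by
            simp only [hpr]
            rw [Nat.cast_sub (le_of_lt hlt), hxj]; ring
          rw [this] at hmem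
          have := gap_min s (j - e x) (by omega) hmem
          omega
        simp only [hpr]
        rw [hej, hxj]; ring
    have sum_gap : ∑ s ∈ S, gap s = p := by
      have hcf := Finset.card_eq_sum_card_fiberwise (f := pr) (s := univ) (t := S)
        (fun x _ => pr_mem x)
      rw [card_univ, ZMod.card] at hcf
      have hsame : ∑ s ∈ S, gap s = ∑ b ∈ S, (filter (fun a => pr a = b) univ).card :=
        Finset.sum_congr rfl (fun s hs => by
          rw [fiber_eq s hs, card_zarc _ (by have := gap_lt_q s hs; omega)])
      rw [hsame, ← hcf]
    -- crossing function
    have crEx : ∀ b : ZMod p, ∃ k : ZMod p,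
        b ∈ S → (k ∈ S ∧ 0 < (k - b).val ∧ (k - b).val < q ∧
          p + 1 ≤ (k - b).val + q + gap k) := by
      intro b
      by_cases hb : b ∈ S
      · set Fb := S.filter (fun s => 0 < (s - b).val ∧ (s - b).val < q) with hFb
        have hFne : Fb.Nonempty := by
          obtain ⟨s, hs, h1, h2⟩ := hfw b hb
          exact ⟨s, by simp only [hFb, mem_filter]; exact ⟨hs, h1, h2⟩⟩
        obtain ⟨k, hkF, hkmax⟩ := Finset.exists_max_image Fb (fun s => (s - b).val) hFne
        simp only [hFb, mem_filter] at hkF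
        refine ⟨k, fun _ => ⟨hkF.1, hkF.2.1, hkF.2.2, ?_⟩⟩
        set G := gap k with hG
        have hG1 : 0 < G := gap_pos k
        have hGq : G < q := gap_lt_q k hkF.1
        have hsc : k + (G : ZMod p) ∈ S := gap_mem k
        have hvG : ((G : ZMod p) : ZMod p).val = G := ZMod.val_cast_of_lt (by omega)
        have hadd : ((k + (G : ZMod p)) - b).val = (k - b).val + G := by
          have h1 : (k + (G:ZMod p)) - b = (k - b) + (G : ZMod p) := by ring
          rw [h1, ZMod.val_add_of_lt (by rw [hvG]; have := hkF.2.2; omega), hvG]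
        have hq_le : q ≤ ((k + (G:ZMod p)) - b).val := by
          by_contra hlt
          push_neg at hlt
          have hmemF : (k + (G:ZMod p)) ∈ Fb := by
            simp only [hFb, mem_filter]
            exact ⟨hsc, by omega, hlt⟩
          have := hkmax _ hmemF
          omega
        have hne : (k + (G:ZMod p)) ≠ b := by
          intro h
          rw [h] at hq_le
          simp [ZMod.val_zero] at hq_le
          omega
        have hpair : (b - (k + (G:ZMod p))).val < q := by
          rcases hS b hb _ hsc (Ne.symm hne) with h | h
          · exact h
          · omega
        have hsum := val_sub_add_val_sub hne (v := b)
        omega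
      · exact ⟨0, fun h => absurd h hb⟩
    choose cr hcr using crEx
    classical
    set im := S.image cr with him
    have im_sub : im ⊆ S := by
      intro k hk
      simp only [him, mem_image] at hk
      obtain ⟨b, hb, rfl⟩ := hk
      exact (hcr b hb).1
    have card_S_eq : S.card = ∑ k ∈ im, (S.filter (fun b => cr b = k)).card :=
      Finset.card_eq_sum_card_fiberwise (fun b hb => mem_image_of_mem cr hb)
    have t_bound : ∀ k ∈ im, (S.filter (fun b => cr b = k)).card + (p + 1) ≤ 2*q + gap k := by
      intro k hk
      have hkS := im_sub hk
      have hcard : (S.filter (fun b => cr b = k)).card ≤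
          (Finset.Icc (p + 1 - q - gap k) (q-1)).card := by
        apply card_le_card_of_injOn (fun b => (k - b).val)
        · intro b hbf
          simp only [Finset.mem_coe, mem_filter] at hbf
          obtain ⟨hbS, hbk⟩ := hbf
          have h := hcr b hbS
          rw [hbk] at h
          obtain ⟨_, h1, h2, h3⟩ := h
          simp only [Finset.coe_Icc, Set.mem_Icc, Finset.mem_coe, Finset.mem_Icc]
          omega
        · intro b1 h1 b2 h2 heq
          simp only at heq
          have : k - b1 = k - b2 := by
            rw [← natCast_val_eq (k - b1), ← natCast_val_eq (k - b2), heq]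
          have := sub_right_injective this
          exact this
      rw [Nat.card_Icc] at hcard
      have hgq := gap_lt_q k hkS
      have hwit : p + 2 ≤ 2*q + gap k := by
        simp only [him, mem_image] at hk
        obtain ⟨b, hb, rfl⟩ := hk
        obtain ⟨_, h1, h2, h3⟩ := hcr b hb
        omega
      omega
    have im_ne : im.Nonempty := ⟨cr s₀, mem_image_of_mem cr hs₀⟩
    -- sum over image of gaps
    have sum_im_le : ∑ k ∈ im, gap k + (S.card - im.card) ≤ p := by
      have hsplit : ∑ s ∈ S \ im, gap s + ∑ k ∈ im, gap k = p := by
        rw [Finset.sum_sdiff im_sub]; exact sum_gap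
      have hge : S.card - im.card ≤ ∑ s ∈ S \ im, gap s := by
        have h1 : (S \ im).card ≤ ∑ s ∈ S \ im, gap s := by
          calc (S \ im).card = ∑ _s ∈ S \ im, 1 := by simp
          _ ≤ ∑ s ∈ S \ im, gap s := Finset.sum_le_sum (fun s _ => gap_pos s)
        rw [Finset.card_sdiff_of_subset im_sub] at h1
        exact h1
      omega
    have hrn : im.card ≤ S.card := Finset.card_image_le
    set m := p + 1 - 2*q with hm
    have hm2 : 2 ≤ m := by omega
    have t_bound' : ∀ k ∈ im, (S.filter (fun b => cr b = k)).card + m ≤ gap k := by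
      intro k hk
      have := t_bound k hk
      omega
    have hA : ∑ k ∈ im, ((S.filter (fun b => cr b = k)).card + m) ≤ ∑ k ∈ im, gap k :=
      Finset.sum_le_sum t_bound'
    rw [Finset.sum_add_distrib, Finset.sum_const, ← card_S_eq, smul_eq_mul] at hA
    obtain ⟨r', hr'⟩ := Nat.exists_eq_add_of_le (Finset.card_pos.mpr im_ne)
    have hmul : im.card * m = m + r' * m := by rw [hr']; ring
    have hr'le : r' ≤ r' * m := Nat.le_mul_of_pos_right r' (by omega)
    have hr2 : 2 * r' ≤ r' * m := by
      calc 2 * r' = r' * 2 := by ring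
      _ ≤ r' * m := Nat.mul_le_mul_left r' hm2
    have hq_le : S.card ≤ q := by omega
    refine ⟨hq_le, fun hEq => ?_⟩
    exfalso
    have hr0 : r' = 0 := by omega
    have him1 : im.card = 1 := by omega
    obtain ⟨k, hkk⟩ := Finset.card_eq_one.mp him1
    have hkim : k ∈ im := by rw [hkk]; exact mem_singleton_self k
    have hSk : S.card = (S.filter (fun b => cr b = k)).card := by
      rw [card_S_eq, hkk, Finset.sum_singleton]
    have hb := t_bound k hkim
    have hgk := gap_lt_q k (im_sub hkim)
    omega

lemma neg_natCast [NeZero p] {t : ℕ} (h1 : t ≤ p) : (-(t : ZMod p)) = ((p - t : ℕ) : ZMod p) := by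
  rw [Nat.cast_sub h1, ZMod.natCast_self, zero_sub]

/-- `val` of a difference of two casts. -/
lemma val_coe_sub_coe [NeZero p] {s t : ℕ} (hs : s < p) (ht : t < p) :
    ((s : ZMod p) - (t : ZMod p)).val = if t ≤ s then s - t else p + s - t := by
  split_ifs with h
  · rw [← Nat.cast_sub h, ZMod.val_cast_of_lt (by omega)]
  · have h2 : (s : ZMod p) - t = -(((t - s : ℕ)) : ZMod p) := by
      rw [Nat.cast_sub (by omega : s ≤ t)]; ring
    rw [h2, neg_natCast (by omega)]
    rw [ZMod.val_cast_of_lt (by omega)]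
    omega

/-- If the difference of two `q`-arcs is a singleton, the arcs are adjacent translates. -/
lemma arc_sdiff_cases {q : ℕ} (hq : 2 ≤ q) (hp : 2*q+1 ≤ p) {a b x : ZMod p}
    (h : zarc a q \ zarc b q = {x}) :
    (b = a + 1 ∧ x = a) ∨ (b = a - 1 ∧ x = a + (q : ZMod p) - 1) := by
  haveI : NeZero p := ⟨by omega⟩
  have hqp : q ≤ p := by omega
  have hmem : ∀ y : ZMod p, (y ∈ zarc a q \ zarc b q) ↔ ((y - a).val < q ∧ ¬ (y - b).val < q) := by
    intro y; rw [Finset.mem_sdiff, mem_zarc hqp, mem_zarc hqp]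
  have hab : a ≠ b := by
    rintro rfl
    have := h ▸ Finset.sdiff_self (zarc a q)
    exact (Finset.singleton_ne_empty x) this
  set t := (b - a).val with htd
  have hba : b - a = (t : ZMod p) := (natCast_val_eq _).symm
  have htp : t < p := ZMod.val_lt _
  have ht0 : 0 < t := by
    rcases Nat.eq_zero_or_pos t with h0 | h0
    · exfalso; apply hab; have : b - a = 0 := by rw [hba, h0]; simp
      linear_combination -this
    · exact h0
  rcases Nat.lt_or_ge (p - t) q with hwrap | hnowrap
  · -- t ≥ p - q + 1 : "b behind a" case; x = a + q - 1, b = a - 1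
    -- a + (q-1) ∈ sdiff
    have key : ∀ (s : ℕ), s < q → q ≤ p - t + s → (a + (s : ZMod p)) ∈ zarc a q \ zarc b q := by
      intro s hsq hge
      rw [hmem]
      constructor
      · have : a + (s:ZMod p) - a = (s : ZMod p) := by ring
        rw [this, ZMod.val_cast_of_lt (by omega)]; exact hsq
      · have h2 : a + (s:ZMod p) - b = ((p - t + s : ℕ) : ZMod p) := by
          push_cast
          rw [Nat.cast_sub (le_of_lt htp), ZMod.natCast_self]
          rw [← hba]; ring
        rw [h2, ZMod.val_cast_of_lt (by omega)]
        omega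
    have h1 : a + ((q-1 : ℕ) : ZMod p) = x := by
      have := key (q-1) (by omega) (by omega)
      rw [h, Finset.mem_singleton] at this; exact this
    have ht1 : t = p - 1 := by
      by_contra hne
      have h2 : a + ((q-2 : ℕ) : ZMod p) = x := by
        have := key (q-2) (by omega) (by omega)
        rw [h, Finset.mem_singleton] at this; exact this
      have h3 : ((q-1 : ℕ) : ZMod p) = ((q-2 : ℕ):ZMod p) := by
        have := h1.trans h2.symm
        exact add_left_cancel this
      have := congrArg ZMod.val h3
      rw [ZMod.val_cast_of_lt (by omega), ZMod.val_cast_of_lt (by omega)] at this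
      omega
    right
    constructor
    · have : b - a = ((p - 1 : ℕ) : ZMod p) := by rw [hba, ht1]
      rw [Nat.cast_sub (by omega), ZMod.natCast_self, zero_sub] at this
      push_cast at this
      linear_combination this
    · rw [← h1]
      rw [Nat.cast_sub (by omega : 1 ≤ q)]
      push_cast
      ring
  · -- t ≤ p - q : x = a, b = a + 1
    have key : ∀ (s : ℕ), s < q → s < t → q ≤ p - t + s → (a + (s : ZMod p)) ∈ zarc a q \ zarc b q := by
      intro s hsq hst hge
      rw [hmem]
      constructor
      · have : a + (s:ZMod p) - a = (s : ZMod p) := by ring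
        rw [this, ZMod.val_cast_of_lt (by omega)]; exact hsq
      · have h2 : a + (s:ZMod p) - b = ((p - t + s : ℕ) : ZMod p) := by
          push_cast
          rw [Nat.cast_sub (le_of_lt htp), ZMod.natCast_self]
          rw [← hba]; ring
        rw [h2, ZMod.val_cast_of_lt (by omega)]
        omega
    have h1 : a = x := by
      have := key 0 (by omega) (by omega) (by omega)
      rw [h, Finset.mem_singleton] at this; simpa using this
    have ht1 : t = 1 := by
      by_contra hne
      have h2 : a + ((1 : ℕ) : ZMod p) = x := by
        have := key 1 (by omega) (by omega) (by omega)
        rw [h, Finset.mem_singleton] at this; exact this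
      rw [← h1] at h2
      have h3 : ((1:ℕ) : ZMod p) = 0 := by linear_combination h2
      rw [ZMod.natCast_eq_zero_iff] at h3
      have := Nat.le_of_dvd one_pos h3
      omega
    left
    constructor
    · have : b - a = ((1:ℕ) : ZMod p) := by rw [hba, ht1]
      push_cast at this
      linear_combination this
    · exact h1.symm

end CohomHelpers

open Finset in
/-- For `q ≥ 2` and `gcd(p, q) = 1`, every self-cohomomorphism of `E_{p/q}` is a
rotation possibly composed with a reflection. -/
theorem cohom_fractionGraph_self_eq_rotation_or_reflection (p q : ℕ)
    (hq : 2 ≤ q) (hp : 2 * q ≤ p) (hgcd : Nat.gcd p q = 1)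
    (f : ZMod p → ZMod p) (hf : IsCohom (fractionGraph p q) (fractionGraph p q) f) :
    ∃ a : ZMod p, (∀ x, f x = a + x) ∨ (∀ x, f x = a - x) := by
  classical
  haveI : NeZero p := ⟨by omega⟩
  have hp1 : 2*q + 1 ≤ p := by
    rcases eq_or_lt_of_le hp with h | h
    · exfalso
      have hdvd : q ∣ Nat.gcd p q := Nat.dvd_gcd ⟨2, by omega⟩ dvd_rfl
      rw [hgcd] at hdvd
      have := Nat.le_of_dvd one_pos hdvd
      omega
    · omega
  haveI : Fact (1 < p) := ⟨by omega⟩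
  have hqp : q ≤ p := by omega
  have adjE : ∀ u v : ZMod p, (fractionGraph p q).Adj u v ↔
      (u ≠ v ∧ ((u-v).val < q ∨ (v-u).val < q)) := fun u v => Iff.rfl
  have hvq : ((q : ZMod p)).val = q := ZMod.val_cast_of_lt (by omega)
  -- preimages of arcs are cliques
  set P : ZMod p → Finset (ZMod p) := fun i => univ.filter (fun x => f x ∈ zarc i q) with hP
  have hclique : ∀ i : ZMod p, ∀ u ∈ P i, ∀ v ∈ P i, u ≠ v →
      ((u-v).val < q ∨ (v-u).val < q) := by
    intro i u hu v hv huv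
    by_contra hno
    push_neg at hno
    have hnadj : ¬ (fractionGraph p q).Adj u v := by
      rw [adjE]
      rintro ⟨-, h | h⟩ <;> omega
    obtain ⟨hne', hnadj'⟩ := hf u v huv hnadj
    apply hnadj'
    rw [adjE]
    refine ⟨hne', ?_⟩
    simp only [hP, mem_filter, mem_univ, true_and, mem_zarc hqp] at hu hv
    set s := (f u - i).val with hs
    set t := (f v - i).val with ht
    have h1 : f u - f v = (s : ZMod p) - (t : ZMod p) := by
      rw [natCast_val_eq, natCast_val_eq]; ring
    have h2 : f v - f u = (t : ZMod p) - (s : ZMod p) := by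
      rw [natCast_val_eq, natCast_val_eq]; ring
    rcases le_or_gt t s with hle | hlt
    · left; rw [h1, val_coe_sub_coe (by omega) (by omega)]
      simp only [hle, if_true]; omega
    · right; rw [h2, val_coe_sub_coe (by omega) (by omega)]
      simp only [le_of_lt hlt, if_true]; omega
  -- each preimage has exactly q elements
  have hPle : ∀ i, (P i).card ≤ q := fun i =>
    (clique_struct hq hp1 (P i) (hclique i)).1
  have fibq : ∀ z : ZMod p, univ.filter (fun i : ZMod p => z ∈ zarc i q)
      = zarc (z + 1 - (q : ZMod p)) q := by
    intro z
    ext i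
    simp only [mem_filter, mem_univ, true_and, mem_zarc hqp]
    set t := (z - i).val with ht
    have h1 : i - (z + 1 - (q:ZMod p)) = ((q - 1 : ℕ) : ZMod p) - (t : ZMod p) := by
      rw [natCast_val_eq, Nat.cast_sub (by omega : 1 ≤ q)]
      push_cast
      ring
    have htp : t < p := ZMod.val_lt _
    rw [h1, val_coe_sub_coe (by omega) (by omega)]
    split_ifs with hc <;> omega
  have hsum : ∑ i : ZMod p, (P i).card = p * q := by
    have h1 : ∀ i : ZMod p, (P i).card = ∑ x : ZMod p, if f x ∈ zarc i q then 1 else 0 := by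
      intro i; rw [Finset.card_filter]
    calc ∑ i : ZMod p, (P i).card
        = ∑ i : ZMod p, ∑ x : ZMod p, if f x ∈ zarc i q then 1 else 0 :=
          Finset.sum_congr rfl (fun i _ => h1 i)
      _ = ∑ x : ZMod p, ∑ i : ZMod p, if f x ∈ zarc i q then 1 else 0 := Finset.sum_comm
      _ = ∑ _x : ZMod p, q := by
          refine Finset.sum_congr rfl (fun x _ => ?_)
          rw [← Finset.card_filter, fibq, card_zarc _ hqp]
      _ = p * q := by rw [Finset.sum_const, card_univ, ZMod.card, smul_eq_mul]
  have cardP : ∀ i, (P i).card = q := by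
    by_contra hno
    push_neg at hno
    obtain ⟨i0, hi0⟩ := hno
    have hlt : (P i0).card < q := lt_of_le_of_ne (hPle i0) hi0
    have : ∑ i : ZMod p, (P i).card < ∑ _i : ZMod p, q :=
      Finset.sum_lt_sum (fun i _ => hPle i) ⟨i0, mem_univ i0, hlt⟩
    rw [hsum, Finset.sum_const, card_univ, ZMod.card, smul_eq_mul] at this
    omega
  have harc : ∀ i : ZMod p, ∃ a, P i = zarc a q := fun i =>
    (clique_struct hq hp1 (P i) (hclique i)).2 (cardP i)
  choose g hg using harc
  -- fibers of f
  set fib : ZMod p → Finset (ZMod p) := fun i => univ.filter (fun x => f x = i) with hfibdef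
  have fib_eq : ∀ i : ZMod p, fib i = P i \ P (i+1) := by
    intro i
    ext x
    simp only [hfibdef, hP, mem_filter, mem_univ, true_and, Finset.mem_sdiff,
      mem_zarc hqp]
    constructor
    · rintro rfl
      refine ⟨by simp [ZMod.val_zero]; omega, ?_⟩
      have h1 : f x - (f x + 1) = ((p - 1 : ℕ) : ZMod p) := by
        rw [Nat.cast_sub (by omega : 1 ≤ p), ZMod.natCast_self]
        push_cast; ring
      rw [h1, ZMod.val_cast_of_lt (by omega)]
      omega
    · rintro ⟨h1, h2⟩
      set t := (f x - i).val with ht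
      have htp : t < p := ZMod.val_lt _
      have h3 : f x - (i + 1) = (t : ZMod p) - ((1:ℕ) : ZMod p) := by
        rw [natCast_val_eq]; push_cast; ring
      rw [h3, val_coe_sub_coe (by omega) (by omega)] at h2
      have ht0 : t = 0 := by split_ifs at h2 <;> omega
      have : f x - i = 0 := by
        rw [← natCast_val_eq (f x - i), ← ht, ht0, Nat.cast_zero]
      linear_combination this
  have fib_q_eq : ∀ i : ZMod p, fib (i + (q:ZMod p)) = P (i+1) \ P i := by
    intro i
    ext x
    simp only [hfibdef, hP, mem_filter, mem_univ, true_and, Finset.mem_sdiff,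
      mem_zarc hqp]
    constructor
    · intro h1
      have h2 : f x - i = ((q:ℕ) : ZMod p) := by rw [h1]; push_cast; ring
      have h3 : f x - (i + 1) = ((q - 1 : ℕ) : ZMod p) := by
        rw [h1, Nat.cast_sub (by omega : 1 ≤ q)]; push_cast; ring
      constructor
      · rw [h3, ZMod.val_cast_of_lt (by omega)]; omega
      · rw [h2, ZMod.val_cast_of_lt (by omega)]; omega
    · rintro ⟨h1, h2⟩
      set t := (f x - i).val with ht
      have htp : t < p := ZMod.val_lt _
      have h3 : f x - (i + 1) = (t : ZMod p) - ((1:ℕ) : ZMod p) := by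
        rw [natCast_val_eq]; push_cast; ring
      rw [h3, val_coe_sub_coe (by omega) (by omega)] at h1
      have htq : t = q := by split_ifs at h1 <;> omega
      have : f x - i = ((q:ℕ) : ZMod p) := by
        rw [← natCast_val_eq (f x - i), ← ht, htq]
      push_cast at this
      linear_combination this
  have dshift : ∀ i : ZMod p, (fib i).card = (fib (i + (q:ZMod p))).card := by
    intro i
    rw [fib_eq i, fib_q_eq i, hg i, hg (i+1)]
    exact Finset.card_sdiff_comm (by rw [card_zarc _ hqp, card_zarc _ hqp])
  -- d is constant
  have dconst : ∀ i j : ZMod p, (fib i).card = (fib j).card := by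
    have step : ∀ (i : ZMod p) (n : ℕ), (fib i).card = (fib (i + (n : ℕ) * (q:ZMod p))).card := by
      intro i n
      induction n with
      | zero => simp
      | succ n ih =>
        rw [ih, dshift (i + (n:ℕ) * (q:ZMod p))]
        congr 1
        push_cast
        ring
    intro i j
    have hcop : Nat.Coprime q p := (Nat.coprime_comm.mp hgcd)
    obtain ⟨u, hu⟩ := ((ZMod.isUnit_iff_coprime q p).mpr hcop).exists_left_inv
    have := step i (((j - i) * u).val)
    rw [this]
    congr 1
    rw [natCast_val_eq]
    have : (j - i) * u * (q:ZMod p) = (j - i) * (u * (q:ZMod p)) := by ring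
    rw [this, hu, mul_one]
    ring
  have sumfib : ∑ i : ZMod p, (fib i).card = p := by
    have hcf := Finset.card_eq_sum_card_fiberwise (f := f) (s := univ) (t := univ)
      (fun x _ => mem_univ (f x))
    rw [card_univ, ZMod.card] at hcf
    exact hcf.symm
  have d1 : ∀ i : ZMod p, (fib i).card = 1 := by
    intro i
    have hall : ∀ j : ZMod p, (fib j).card = (fib i).card := fun j => dconst j i
    have : ∑ j : ZMod p, (fib j).card = p * (fib i).card := by
      rw [Finset.sum_congr rfl (fun j _ => hall j), Finset.sum_const, card_univ,
        ZMod.card, smul_eq_mul]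
    rw [sumfib] at this
    have hp0 : 0 < p := by omega
    nlinarith [this]
  have hfib : ∀ i : ZMod p, ∃ x, fib i = {x} := fun i => Finset.card_eq_one.mp (d1 i)
  choose h hh using hfib
  have hfx : ∀ i, f (h i) = i := by
    intro i
    have : h i ∈ fib i := by rw [hh i]; exact Finset.mem_singleton_self (h i)
    simpa [hfibdef, mem_filter] using this
  have huniq : ∀ x, x = h (f x) := by
    intro x
    have : x ∈ fib (f x) := by simp [hfibdef, mem_filter]
    rw [hh (f x)] at this
    exact Finset.mem_singleton.mp this
  -- dichotomy for each i
  have dich : ∀ i : ZMod p,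
      (g (i+1) = g i + 1 ∧ h i = g i) ∨
      (g (i+1) = g i - 1 ∧ h i = g i + (q:ZMod p) - 1) := by
    intro i
    have hsd : zarc (g i) q \ zarc (g (i+1)) q = {h i} := by
      rw [← hg i, ← hg (i+1), ← fib_eq i, hh i]
    exact arc_sdiff_cases hq hp1 hsd
  have excl : ∀ i : ZMod p, g (i+1) = g i + 1 → g (i+1) = g i - 1 → False := by
    intro i h1 h2
    have h3 : ((2:ℕ) : ZMod p) = 0 := by
      push_cast
      linear_combination h2 - h1
    rw [ZMod.natCast_eq_zero_iff] at h3
    have := Nat.le_of_dvd (by omega) h3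
    omega
  -- h preserves adjacency
  have hadj : ∀ i j, (fractionGraph p q).Adj i j → (fractionGraph p q).Adj (h i) (h j) := by
    intro i j hij
    have hne : h i ≠ h j := by
      intro hEq
      have : i = j := by rw [← hfx i, ← hfx j, hEq]
      exact hij.ne this
    by_contra hnadj
    obtain ⟨-, h2⟩ := hf (h i) (h j) hne hnadj
    rw [hfx, hfx] at h2
    exact h2 hij
  have nadj_q : ∀ x : ZMod p, ¬ (fractionGraph p q).Adj x (x + (q:ZMod p)) := by
    intro x hAdj
    rw [adjE] at hAdj
    obtain ⟨-, hor⟩ := hAdj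
    have h1 : x - (x + (q:ZMod p)) = ((p - q : ℕ) : ZMod p) := by
      rw [Nat.cast_sub (by omega : q ≤ p), ZMod.natCast_self]
      push_cast; ring
    have h2 : (x + (q:ZMod p)) - x = ((q:ℕ) : ZMod p) := by push_cast; ring
    rcases hor with h | h
    · rw [h1, ZMod.val_cast_of_lt (by omega)] at h; omega
    · rw [h2, ZMod.val_cast_of_lt (by omega)] at h; omega
  have adj_one : ∀ x : ZMod p, (fractionGraph p q).Adj x (x+1) := by
    intro x
    rw [adjE]
    constructor
    · intro hEq
      have : (0:ZMod p) = ((1:ℕ) : ZMod p) := by push_cast; linear_combination hEq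
      have := congrArg ZMod.val this
      rw [ZMod.val_zero, ZMod.val_cast_of_lt (by omega)] at this
      omega
    · right
      have : (x + 1) - x = ((1:ℕ) : ZMod p) := by push_cast; ring
      rw [this, ZMod.val_cast_of_lt (by omega)]
      omega
  -- propagation of direction
  have plus_prop : ∀ i : ZMod p, g (i+1) = g i + 1 → g (i+1+1) = g (i+1) + 1 := by
    intro i hpl
    rcases dich (i+1) with ⟨h1, -⟩ | ⟨h1, h2⟩
    · exact h1
    · exfalso
      rcases dich i with ⟨-, hhi⟩ | ⟨hmi, -⟩
      · have hAdj := hadj i (i+1) (adj_one i)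
        rw [hhi, h2, hpl] at hAdj
        have heq : g i + 1 + (q:ZMod p) - 1 = g i + (q:ZMod p) := by ring
        rw [heq] at hAdj
        exact nadj_q _ hAdj
      · exact excl i hpl hmi
  have minus_prop : ∀ i : ZMod p, g (i+1) = g i - 1 → g (i+1+1) = g (i+1) - 1 := by
    intro i hmi
    rcases dich (i+1) with ⟨h1, h2⟩ | ⟨h1, -⟩
    · exfalso
      rcases dich i with ⟨hpl, -⟩ | ⟨-, hhi⟩
      · exact excl i hpl hmi
      · have hAdj := hadj i (i+1) (adj_one i)
        rw [hhi, h2, hmi] at hAdj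
        have heq : g i + (q:ZMod p) - 1 = (g i - 1) + (q:ZMod p) := by ring
        rw [heq] at hAdj
        exact nadj_q _ hAdj.symm
    · exact h1
  -- induction principle over ZMod p
  have ind : ∀ (Q : ZMod p → Prop), Q 0 → (∀ x, Q x → Q (x+1)) → ∀ x, Q x := by
    intro Q h0 hstep x
    have hn : ∀ n : ℕ, Q ((n:ℕ) : ZMod p) := by
      intro n
      induction n with
      | zero => simpa using h0
      | succ n ih =>
        have := hstep _ ih
        have hcast : ((n:ℕ) : ZMod p) + 1 = (((n+1 : ℕ)) : ZMod p) := by push_cast; ring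
        rwa [hcast] at this
    have := hn x.val
    rwa [natCast_val_eq] at this
  rcases dich 0 with ⟨hp0, -⟩ | ⟨hm0, -⟩
  · -- rotation case
    have hall : ∀ i : ZMod p, g (i+1) = g i + 1 :=
      ind (fun i => g (i+1) = g i + 1) hp0 (fun x hx => plus_prop x hx)
    have hgl : ∀ i : ZMod p, g i = g 0 + i :=
      ind (fun i => g i = g 0 + i) (by simp)
        (fun x hx => by show g (x+1) = g 0 + (x+1); rw [hall x, hx]; ring)
    have hhi : ∀ i, h i = g i := by
      intro i
      rcases dich i with ⟨-, h2⟩ | ⟨hm, -⟩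
      · exact h2
      · exact absurd (excl i (hall i) hm) not_false
    refine ⟨- g 0, Or.inl (fun x => ?_)⟩
    have hx := huniq x
    rw [hhi, hgl] at hx
    linear_combination -hx
  · -- reflection case
    have hall : ∀ i : ZMod p, g (i+1) = g i - 1 :=
      ind (fun i => g (i+1) = g i - 1) hm0 (fun x hx => minus_prop x hx)
    have hgl : ∀ i : ZMod p, g i = g 0 - i :=
      ind (fun i => g i = g 0 - i) (by simp)
        (fun x hx => by show g (x+1) = g 0 - (x+1); rw [hall x, hx]; ring)
    have hhi : ∀ i, h i = g i + (q:ZMod p) - 1 := by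
      intro i
      rcases dich i with ⟨hpl, -⟩ | ⟨-, h2⟩
      · exact absurd (excl i hpl (hall i)) not_false
      · exact h2
    refine ⟨g 0 + (q:ZMod p) - 1, Or.inr (fun x => ?_)⟩
    have hx := huniq x
    rw [hhi, hgl] at hx
    linear_combination hx
end

section
/- For all natural numbers p, q with q ≥ 1 and p ≥ 2q, the open circle graph E^o_{p/q} and the fraction graph E_{p/q} are equivalent under cohomomorphism: there exists a cohomomorphism from E_{p/q} to E^o_{p/q} and a cohomomorphism from E^o_{p/q} to E_{p/q}. -/
open SimpleGraph

lemma normCore (d : ℝ) (h0 : 0 ≤ d) (h1 : d < 1) :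
    ‖(d : AddCircle (1:ℝ))‖ = min d (1 - d) := by
  rw [AddCircle.norm_eq]
  simp only [inv_one, one_mul, mul_one]
  rw [abs_sub_round_eq_min, Int.fract_eq_self.2 ⟨h0, h1⟩]

lemma zmodCore (p q k l : ℕ) (hq : 1 ≤ q) (hkl : k ≤ l) (hl : l < p)
    (h1 : q ≤ l - k) (h2 : l - k ≤ p - q) :
    (k : ZMod p) ≠ (l : ZMod p) ∧ ¬ (fractionGraph p q).Adj (k : ZMod p) (l : ZMod p) := by
  have hp0 : 0 < p := lt_of_le_of_lt (Nat.zero_le l) hl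
  haveI : NeZero p := ⟨hp0.ne'⟩
  set d := l - k with hd
  have hdp : d < p := by omega
  have hqp : q ≤ p := by omega
  have e1 : (l : ZMod p) - (k : ZMod p) = ((d : ℕ) : ZMod p) := by
    rw [hd, Nat.cast_sub hkl]
  have e2 : (k : ZMod p) - (l : ZMod p) = (((p - d : ℕ)) : ZMod p) := by
    rw [Nat.cast_sub (le_of_lt hdp), ZMod.natCast_self, zero_sub, ← e1]
    ring
  have v1 : ((d : ZMod p)).val = d := by
    rw [ZMod.val_natCast, Nat.mod_eq_of_lt hdp]
  have v2 : (((p - d : ℕ) : ZMod p)).val = p - d := by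
    rw [ZMod.val_natCast, Nat.mod_eq_of_lt (by omega)]
  have hne : (k : ZMod p) ≠ (l : ZMod p) := by
    intro h
    have : (l : ZMod p) - (k : ZMod p) = 0 := by rw [h]; ring
    rw [e1] at this
    have := congrArg ZMod.val this
    rw [v1, ZMod.val_zero] at this
    omega
  refine ⟨hne, ?_⟩
  intro hadj
  rcases hadj.2 with h | h
  · rw [e2, v2] at h; omega
  · rw [e1, v1] at h; omega

lemma distCore (s t : ℝ) (h0 : 0 ≤ t - s) (h1 : t - s < 1) :
    dist ((s : ℝ) : AddCircle (1:ℝ)) ((t : ℝ) : AddCircle (1:ℝ))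
      = min (t - s) (1 - (t - s)) := by
  rw [dist_eq_norm, ← AddCircle.coe_sub,
    show ((s - t : ℝ) : AddCircle (1:ℝ)) = -((t - s : ℝ) : AddCircle (1:ℝ)) by
      rw [← AddCircle.coe_neg]; congr 1; ring,
    norm_neg]
  exact normCore _ h0 h1

lemma floorCore (p q : ℕ) (hq : 1 ≤ q) (hp : 2 * q ≤ p) (s t : ℝ)
    (hs0 : 0 ≤ s) (ht1 : t < 1) (hst : s ≤ t)
    (hd1 : (q : ℝ) / p ≤ t - s) (hd2 : t - s ≤ 1 - (q : ℝ) / p) :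
    ((⌊s * p⌋.toNat : ZMod p) ≠ (⌊t * p⌋.toNat : ZMod p)) ∧
      ¬ (fractionGraph p q).Adj (⌊s * p⌋.toNat : ZMod p) (⌊t * p⌋.toNat : ZMod p) := by
  have hp0 : 0 < p := by omega
  have hpR : (0 : ℝ) < p := by exact_mod_cast hp0
  have hK0 : 0 ≤ ⌊s * p⌋ := Int.floor_nonneg.2 (mul_nonneg hs0 hpR.le)
  have hKL : ⌊s * p⌋ ≤ ⌊t * p⌋ := Int.floor_le_floor (by nlinarith)
  have hLp : ⌊t * p⌋ < (p : ℤ) := by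
    apply Int.floor_lt.2
    push_cast
    nlinarith
  have hq' : ⌊s * p⌋ + (q : ℤ) ≤ ⌊t * p⌋ := by
    have : s * p + (q : ℕ) ≤ t * p := by
      have h := mul_le_mul_of_nonneg_right hd1 hpR.le
      have he : ((q:ℝ)/p) * p = q := by field_simp
      nlinarith
    calc ⌊s * p⌋ + (q : ℤ) = ⌊s * p + (q : ℕ)⌋ := (Int.floor_add_natCast _ _).symm
      _ ≤ ⌊t * p⌋ := Int.floor_le_floor this
  have hpq' : ⌊t * p⌋ ≤ ⌊s * p⌋ + ((p - q : ℕ) : ℤ) := by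
    have hle : t * p ≤ s * p + ((p - q : ℕ) : ℝ) := by
      have h := mul_le_mul_of_nonneg_right hd2 hpR.le
      have he : (1 - (q:ℝ)/p) * p = p - q := by field_simp
      have hcast : ((p - q : ℕ) : ℝ) = (p : ℝ) - q := by
        push_cast [Nat.cast_sub (by omega : q ≤ p)]; ring
      nlinarith
    calc ⌊t * p⌋ ≤ ⌊s * p + ((p - q : ℕ) : ℝ)⌋ := Int.floor_le_floor hle
      _ = ⌊s * p⌋ + ((p - q : ℕ) : ℤ) := Int.floor_add_natCast _ _
  set k := ⌊s * p⌋.toNat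
  set l := ⌊t * p⌋.toNat
  have hk : (⌊s * p⌋ : ℤ) = k := (Int.toNat_of_nonneg hK0).symm
  have hl' : (⌊t * p⌋ : ℤ) = l := (Int.toNat_of_nonneg (le_trans hK0 hKL)).symm
  rw [hk] at hKL hq' hpq'
  rw [hl'] at hKL hLp hq' hpq'
  exact zmodCore p q k l hq (by exact_mod_cast hKL) (by exact_mod_cast hLp)
    (by omega) (by omega)

/-- The open circle graph `E^o_{p/q}` and the fraction graph `E_{p/q}` are equivalent
under cohomomorphism. -/
theorem fractionGraph_equiv_openCircleGraph (p q : ℕ) (hq : 1 ≤ q) (hp : 2 * q ≤ p) :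
    (∃ f : ZMod p → AddCircle (1 : ℝ),
      IsCohom (fractionGraph p q) (openCircleGraph ((p : ℝ) / (q : ℝ))) f) ∧
    (∃ g : AddCircle (1 : ℝ) → ZMod p,
      IsCohom (openCircleGraph ((p : ℝ) / (q : ℝ))) (fractionGraph p q) g) := by
  have hp0 : 0 < p := by omega
  have hpR : (0:ℝ) < p := by exact_mod_cast hp0
  have hqR : (0:ℝ) < q := by exact_mod_cast hq
  haveI : NeZero p := ⟨hp0.ne'⟩
  have hrinv : 1 / ((p:ℝ)/(q:ℝ)) = (q:ℝ) / p := one_div_div _ _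
  constructor
  · refine ⟨fun u => (((u.val : ℝ) / p : ℝ) : AddCircle (1:ℝ)), ?_⟩
    intro u v huv hnadj
    have hnadj' : ¬ (u ≠ v ∧ ((u - v).val < q ∨ (v - u).val < q)) := hnadj
    set m := (u - v).val with hm
    set m' := (v - u).val with hm'
    have hqm : q ≤ m := by
      by_contra h
      exact hnadj' ⟨huv, Or.inl (by omega)⟩
    have hqm' : q ≤ m' := by
      by_contra h
      exact hnadj' ⟨huv, Or.inr (by omega)⟩
    have hmlt : m < p := ZMod.val_lt _
    have hm'lt : m' < p := ZMod.val_lt _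
    haveI : NeZero (u - v) := ⟨sub_ne_zero.2 huv⟩
    have hsum : m + m' = p := by
      have e : (v - u) = -(u - v) := by ring
      have := ZMod.val_neg_of_ne_zero (u - v)
      rw [← e] at this
      rw [hm, hm', this]
      omega
    have hmub : m ≤ p - q := by omega
    -- congruence
    have hc1 : ((m : ℕ) : ZMod p) = u - v := by
      rw [hm, ZMod.natCast_val, ZMod.cast_id]
    have hc2 : (((u.val : ℤ) - (v.val : ℤ) : ℤ) : ZMod p) = u - v := by
      push_cast [ZMod.natCast_val, ZMod.cast_id]
      rfl
    have hcong : ((m : ℤ) : ZMod p) = (((u.val : ℤ) - (v.val : ℤ) : ℤ) : ZMod p) := by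
      rw [hc2]
      exact_mod_cast hc1
    obtain ⟨c, hc⟩ := ((ZMod.intCast_eq_intCast_iff _ _ _).1 hcong).dvd
    have hcR : ((u.val : ℝ) - (v.val : ℝ)) - (m : ℝ) = (p : ℝ) * (c : ℝ) := by
      exact_mod_cast congrArg (fun z : ℤ => (z : ℝ)) hc
    have hre : (u.val : ℝ)/p - (v.val : ℝ)/p = (m : ℝ)/p + (c : ℝ) := by
      have h1 : (u.val:ℝ)/p - (v.val:ℝ)/p - (m:ℝ)/p = ((u.val:ℝ) - (v.val:ℝ) - (m:ℝ))/p := by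
        ring
      rw [hcR, mul_comm, mul_div_assoc, div_self hpR.ne', mul_one] at h1
      linarith
    have hcz : (((c : ℝ)) : AddCircle (1:ℝ)) = 0 := by
      rw [AddCircle.coe_eq_zero_iff]
      exact ⟨c, by simp⟩
    have hdisteq : dist (((u.val : ℝ)/p : ℝ) : AddCircle (1:ℝ)) (((v.val : ℝ)/p : ℝ) : AddCircle (1:ℝ))
        = min ((m:ℝ)/p) (1 - (m:ℝ)/p) := by
      rw [dist_eq_norm, ← AddCircle.coe_sub, hre, AddCircle.coe_add, hcz, add_zero]
      refine normCore _ (by positivity) ?_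
      rw [div_lt_one hpR]
      exact_mod_cast hmlt
    have hlb : (q:ℝ)/p ≤ dist (((u.val : ℝ)/p : ℝ) : AddCircle (1:ℝ)) (((v.val : ℝ)/p : ℝ) : AddCircle (1:ℝ)) := by
      rw [hdisteq, le_min_iff]
      constructor
      · have hqmR : (q:ℝ) ≤ (m:ℝ) := by exact_mod_cast hqm
        gcongr
      · have : (m:ℝ)/p + (q:ℝ)/p ≤ 1 := by
          rw [← add_div, div_le_one hpR]
          exact_mod_cast (by omega : m + q ≤ p)
        linarith
    have hposq : (0:ℝ) < (q:ℝ)/p := by positivity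
    refine ⟨?_, ?_⟩
    · exact dist_pos.1 (lt_of_lt_of_le hposq hlb)
    · intro hadj
      have := hadj.2
      rw [hrinv] at this
      linarith
  · refine ⟨fun x => ((⌊(AddCircle.equivIco 1 0 x : ℝ) * p⌋.toNat : ℕ) : ZMod p), ?_⟩
    intro x y hxy hnadj
    have hdist : (q:ℝ)/p ≤ dist x y := by
      by_contra h
      push_neg at h
      exact hnadj ⟨hxy, by rw [hrinv]; exact h⟩
    set s := (AddCircle.equivIco 1 0 x : ℝ) with hsdef
    set t := (AddCircle.equivIco 1 0 y : ℝ) with htdef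
    have hsmem : 0 ≤ s ∧ s < 1 := by
      have h := (AddCircle.equivIco 1 0 x).2
      exact ⟨h.1, by simpa using h.2⟩
    have htmem : 0 ≤ t ∧ t < 1 := by
      have h := (AddCircle.equivIco 1 0 y).2
      exact ⟨h.1, by simpa using h.2⟩
    have hx : ((s : ℝ) : AddCircle (1:ℝ)) = x := (AddCircle.equivIco 1 0).symm_apply_apply x
    have hy : ((t : ℝ) : AddCircle (1:ℝ)) = y := (AddCircle.equivIco 1 0).symm_apply_apply y
    rcases le_total s t with hst | hst
    · have hd : dist x y = min (t - s) (1 - (t - s)) := by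
        rw [← hx, ← hy]
        exact distCore s t (by linarith) (by linarith [hsmem.1, htmem.2])
      rw [hd, le_min_iff] at hdist
      exact floorCore p q hq hp s t hsmem.1 htmem.2 hst hdist.1 (by linarith [hdist.2])
    · have hd : dist y x = min (s - t) (1 - (s - t)) := by
        rw [← hx, ← hy]
        exact distCore t s (by linarith) (by linarith [htmem.1, hsmem.2])
      rw [dist_comm x y, hd, le_min_iff] at hdist
      have R := floorCore p q hq hp t s htmem.1 hsmem.2 hst hdist.1 (by linarith [hdist.2])
      exact ⟨R.1.symm, fun hadj => R.2 hadj.symm⟩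
end

section
/- Let r ≥ 2 be a real number, let N ≥ 2 be an integer, and let S = {k/N mod 1 : k = 0, 1, …, N−1} be the set of N equidistant points on the circle C = ℝ/ℤ. Then the subgraph of the open circle graph E_r^o induced on S is isomorphic to the fraction graph E_{N/⌈N/r⌉}, and the subgraph of the closed circle graph E_r^c induced on S is isomorphic to the fraction graph E_{N/(⌊N/r⌋+1)}. -/
open SimpleGraph

/-- The set of `N` equidistant points on the circle `ℝ/ℤ`. -/
def equidistantPoints (N : ℕ) : Set (AddCircle (1 : ℝ)) :=
  {x | ∃ k : ℕ, k < N ∧ x = ((k : ℝ) / (N : ℝ) : ℝ)}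

noncomputable def pt (N : ℕ) (u : ZMod N) : AddCircle (1:ℝ) := ((u.val : ℝ)/(N:ℝ) : ℝ)

lemma pt_dist (N : ℕ) [NeZero N] (u v : ZMod N) :
    dist (pt N u) (pt N v) = (min (u - v).val (v - u).val : ℕ) / (N : ℝ) := by
  have hN : 0 < N := Nat.pos_of_ne_zero (NeZero.ne N)
  have hNR : (0:ℝ) < N := by exact_mod_cast hN
  rcases eq_or_ne u v with rfl | huv
  · simp
  · have hsub : (pt N u) - (pt N v) = (((u.val : ℝ)/N - (v.val : ℝ)/N : ℝ) : AddCircle (1:ℝ)) := by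
      rw [pt, pt]
      exact (QuotientAddGroup.mk_sub _ _ _).symm
    rw [dist_eq_norm, hsub, AddCircle.norm_eq]
    have hd : (u - v) ≠ 0 := sub_ne_zero.mpr huv
    set d := (u - v).val with hddef
    have hdlt : d < N := (u - v).val_lt
    have hdpos : 0 < d := Nat.pos_of_ne_zero (fun h => hd (by rwa [← ZMod.val_eq_zero]))
    have hvu : (v - u).val = N - d := by
      have : v - u = -(u - v) := by ring
      rw [this, ZMod.neg_val, if_neg hd]
    have hfr : Int.fract ((u.val : ℝ)/N - (v.val : ℝ)/N) = (d : ℝ)/N := by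
      have hdvd : (N : ℤ) ∣ ((u.val : ℤ) - (v.val : ℤ) - (d : ℤ)) := by
        rw [← ZMod.intCast_zmod_eq_zero_iff_dvd]
        push_cast
        rw [ZMod.natCast_zmod_val, ZMod.natCast_zmod_val, ZMod.natCast_zmod_val]
        ring
      obtain ⟨z, hz⟩ := hdvd
      have h1 : Int.fract ((u.val : ℝ)/N - (v.val : ℝ)/N) = Int.fract ((d : ℝ)/N) := by
        rw [Int.fract_eq_fract]
        refine ⟨z, ?_⟩
        have hzR := congrArg (fun x : ℤ => (x : ℝ)) hz
        push_cast at hzR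
        have hr : (u.val:ℝ)/N - (v.val:ℝ)/N - (d:ℝ)/N = ((u.val:ℝ) - v.val - d)/N := by
          ring
        rw [hr, hzR, mul_comm, mul_div_assoc, div_self hNR.ne', mul_one]
      rw [h1, Int.fract_eq_self.mpr ⟨by positivity, by
        rw [div_lt_one hNR]; exact_mod_cast hdlt⟩]
    simp only [mul_one, inv_one, one_mul]
    rw [abs_sub_round_eq_min, hfr, hvu]
    have h1f : 1 - (d:ℝ)/N = ((N - d : ℕ) : ℝ)/N := by
      rw [Nat.cast_sub hdlt.le]
      field_simp
    rw [h1f, Nat.cast_min, min_div_div_right hNR.le]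

lemma pt_inj (N : ℕ) [NeZero N] : Function.Injective (pt N) := by
  intro u v h
  have := pt_dist N u v
  rw [h] at this
  rw [_root_.dist_self] at this
  have hNR : (0:ℝ) < N := by exact_mod_cast Nat.pos_of_ne_zero (NeZero.ne N)
  have hmin : (min (u - v).val (v - u).val : ℕ) = 0 := by
    have h2 : ((min (u - v).val (v - u).val : ℕ) : ℝ) = 0 := by
      rcases div_eq_zero_iff.mp this.symm with h' | h'
      · exact h'
      · exact absurd h' hNR.ne'
    exact_mod_cast h2
  rcases Nat.min_eq_zero_iff.mp hmin with h0 | h0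
  · have := ZMod.val_eq_zero _ |>.mp h0
    exact sub_eq_zero.mp this
  · have := ZMod.val_eq_zero _ |>.mp h0
    exact (sub_eq_zero.mp this).symm

lemma pt_mem (N : ℕ) [NeZero N] (u : ZMod N) : pt N u ∈ equidistantPoints N :=
  ⟨u.val, u.val_lt, rfl⟩

lemma aux_iso (N : ℕ) (hN : 2 ≤ N) (G : SimpleGraph (AddCircle (1:ℝ))) (q : ℕ)
    (h : ∀ u v : ZMod N, u ≠ v →
      (G.Adj (pt N u) (pt N v) ↔ ((u - v).val < q ∨ (v - u).val < q))) :
    Nonempty (G.induce (equidistantPoints N) ≃g fractionGraph N q) := by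
  haveI : NeZero N := ⟨by omega⟩
  have hbij : Function.Bijective (fun u : ZMod N => (⟨pt N u, pt_mem N u⟩ : equidistantPoints N)) := by
    constructor
    · intro u v huv
      exact pt_inj N (congrArg Subtype.val huv)
    · rintro ⟨x, k, hk, rfl⟩
      exact ⟨(k : ZMod N), by simp [pt, ZMod.val_natCast_of_lt hk]⟩
  let e := Equiv.ofBijective _ hbij
  refine ⟨(SimpleGraph.Iso.symm ⟨e, ?_⟩ : _)⟩
  intro a b
  show G.Adj (pt N a) (pt N b) ↔ (fractionGraph N q).Adj a b
  rcases eq_or_ne a b with rfl | hab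
  · simp [fractionGraph]
  · rw [h a b hab]
    simp [fractionGraph, hab]

/-- The subgraph of `E_r^o` induced on `N` equidistant points is isomorphic to
`E_{N/⌈N/r⌉}`, and the subgraph of `E_r^c` induced on them is isomorphic to
`E_{N/(⌊N/r⌋+1)}`. -/
theorem induce_equidistant_circleGraphs_iso_fractionGraph (r : ℝ) (hr : 2 ≤ r)
    (N : ℕ) (hN : 2 ≤ N) :
    Nonempty ((openCircleGraph r).induce (equidistantPoints N) ≃g
      fractionGraph N ⌈(N : ℝ) / r⌉₊) ∧
    Nonempty ((closedCircleGraph r).induce (equidistantPoints N) ≃g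
      fractionGraph N (⌊(N : ℝ) / r⌋₊ + 1)) := by
  have hr0 : (0:ℝ) < r := lt_of_lt_of_le two_pos hr
  have hNR : (0:ℝ) < N := by exact_mod_cast (by omega : 0 < N)
  haveI : NeZero N := ⟨by omega⟩
  constructor
  · apply aux_iso N hN
    intro u v huv
    constructor
    · rintro ⟨-, hd⟩
      rw [pt_dist] at hd
      have h1 : ((min (u-v).val (v-u).val : ℕ) : ℝ) < (N:ℝ) / r := by
        rw [lt_div_iff₀ hr0]
        rw [div_lt_div_iff₀ hNR hr0] at hd
        linarith
      exact min_lt_iff.mp (Nat.lt_ceil.mpr h1)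
    · intro h
      refine ⟨fun he => huv (pt_inj N he), ?_⟩
      rw [pt_dist]
      have h1 := Nat.lt_ceil.mp (min_lt_iff.mpr h)
      rw [div_lt_div_iff₀ hNR hr0]
      rw [lt_div_iff₀ hr0] at h1
      linarith
  · apply aux_iso N hN
    intro u v huv
    constructor
    · rintro ⟨-, hd⟩
      rw [pt_dist] at hd
      have h1 : ((min (u-v).val (v-u).val : ℕ) : ℝ) ≤ (N:ℝ) / r := by
        rw [le_div_iff₀ hr0]
        rw [div_le_div_iff₀ hNR hr0] at hd
        linarith
      have h2 := Nat.le_floor h1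
      exact min_lt_iff.mp (Nat.lt_succ_of_le h2)
    · intro h
      refine ⟨fun he => huv (pt_inj N he), ?_⟩
      rw [pt_dist]
      have h1 := (Nat.le_floor_iff (div_nonneg hNR.le hr0.le)).mp
        (Nat.lt_succ_iff.mp (min_lt_iff.mpr h))
      rw [div_le_div_iff₀ hNR hr0]
      rw [le_div_iff₀ hr0] at h1
      linarith
end
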